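/- arXiv:2010.15527 — 5 statements merged into one kernel-verified Lean document; each statement's English description precedes it below -/
import Mathlib

section
/- Let L be a pairwise loss function that is Lipschitz continuous with constant |L|₁, let P be a Borel probability measure on X×Y, let λ > 0, and suppose f_{L*,P,λ} ∈ H is a minimizer of the regularized shifted risk over H. Then: (i) λ‖f_{L*,P,λ}‖²_H ≤ −R_{L*,P}(f̂_{L*,P,λ}) ≤ R_{L,P}(0), where R_{L,P}(0) is the risk of the zero function; (ii) λ‖f_{L*,P,λ}‖²_H ≤ |L|₁ · ∫ |f̂_{L*,P,λ}| d(P⊗P); (iii) if moreover ‖k‖_∞ := sup_{(x,x')} ‖Φ(x,x')‖_H < ∞, then sup_{(x,x')} |f̂_{L*,P,λ}(x,x')| ≤ λ⁻¹·|L|₁·‖k‖²_∞ and |R_{L*,P}(f̂_{L*,P,λ})| ≤ λ⁻¹·|L|₁²·‖k‖²_∞. -/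
/-!
Comparing the minimizer with `0 ∈ H`, whose regularized shifted risk vanishes, gives
`λ‖f‖² ≤ -R_{L*,P}(f̂)`. The shifted loss satisfies `-L(·,0) ≤ L* ≤ |L|₁ |t|`, which bounds
`-R_{L*,P}(f̂)` by `R_{L,P}(0)` and `|R_{L*,P}(f̂)|` by `|L|₁ ∫ |f̂|`. With a bounded feature map,
`|f̂| ≤ ‖f‖ ‖k‖_∞` turns `λ‖f‖² ≤ |L|₁ ‖f‖ ‖k‖_∞` into `‖f‖ ≤ λ⁻¹ |L|₁ ‖k‖_∞`, and the
sup-norm and risk bounds follow.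
-/

open MeasureTheory

/-- The function on `X × X` induced by an element `f` of the RKHS with feature map `Φ`:
`f̂(x,x') = ⟪f, Φ(x,x')⟫_H` (reproducing property). -/
noncomputable def fhat {X H : Type*} [NormedAddCommGroup H] [InnerProductSpace ℝ H]
    (Φ : X × X → H) (f : H) : X × X → ℝ :=
  fun p => @inner ℝ H _ f (Φ p)

/-- The shifted risk `R_{L*,P}(f) = ∫ L(x,y,x',y',f(x,x')) - L(x,y,x',y',0) d(P⊗P)`. -/
noncomputable def shiftedRisk {X Y : Type*} [MeasurableSpace X] [MeasurableSpace Y]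
    (L : X → Y → X → Y → ℝ → ℝ) (P : Measure (X × Y)) (f : X × X → ℝ) : ℝ :=
  ∫ z : (X × Y) × (X × Y),
    (L z.1.1 z.1.2 z.2.1 z.2.2 (f (z.1.1, z.2.1)) - L z.1.1 z.1.2 z.2.1 z.2.2 0) ∂(P.prod P)

/-- The regularized shifted risk `R^reg_{L*,P,λ}(f) = R_{L*,P}(f̂) + λ‖f‖²` for `f ∈ H`. -/
noncomputable def regRisk {X Y H : Type*} [MeasurableSpace X] [MeasurableSpace Y]
    [NormedAddCommGroup H] [InnerProductSpace ℝ H]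
    (L : X → Y → X → Y → ℝ → ℝ) (Φ : X × X → H) (P : Measure (X × Y))
    (lam : ℝ) (f : H) : ℝ :=
  shiftedRisk L P (fhat Φ f) + lam * ‖f‖ ^ 2

lemma ofReal_integral_le_lintegral_ofReal {α : Type*} [MeasurableSpace α] {μ : Measure α}
    (f : α → ℝ) : ENNReal.ofReal (∫ x, f x ∂μ) ≤ ∫⁻ x, ENNReal.ofReal (f x) ∂μ := by
  by_cases hf : Integrable f μ
  · refine ENNReal.ofReal_le_of_le_toReal ?_
    rw [integral_eq_lintegral_pos_part_sub_lintegral_neg_part hf]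
    exact sub_le_self _ ENNReal.toReal_nonneg
  · simp [integral_undef hf]

lemma integral_le_of_abs_le {α : Type*} [MeasurableSpace α] {μ : Measure α}
    [IsProbabilityMeasure μ] {f : α → ℝ} {C : ℝ} (hf : ∀ x, |f x| ≤ C) : ∫ x, f x ∂μ ≤ C := by
  have h := norm_integral_le_of_norm_le_const (μ := μ) (f := f)
    (Filter.Eventually.of_forall fun x => (Real.norm_eq_abs (f x)).trans_le (hf x))
  rw [probReal_univ, mul_one, Real.norm_eq_abs] at h
  exact (le_abs_self _).trans h

lemma le_inv_mul_of_mul_sq_le_mul {a b x : ℝ} (ha : 0 < a) (hb : 0 ≤ b) (hx : 0 ≤ x)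
    (h : a * x ^ 2 ≤ b * x) : x ≤ a⁻¹ * b := by
  rw [le_inv_mul_iff₀ ha]
  rcases hx.eq_or_lt with rfl | hx
  · simpa using hb
  · nlinarith

section FeatureMap

variable {X H : Type*} [NormedAddCommGroup H] [InnerProductSpace ℝ H] (Φ : X × X → H)

@[simp]
lemma fhat_zero : fhat Φ 0 = 0 := by
  ext p
  simp [fhat]

lemma abs_fhat_le (f : H) (p : X × X) : |fhat Φ f p| ≤ ‖f‖ * ‖Φ p‖ :=
  abs_real_inner_le_norm f (Φ p)

end FeatureMap

section ShiftedRisk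

variable {X Y : Type*} {L : X → Y → X → Y → ℝ → ℝ} {c : ℝ}

lemma norm_shiftedLoss_le
    (hL_lip : ∀ x y x' y' s t, |L x y x' y' t - L x y x' y' s| ≤ c * |t - s|)
    (x : X) (y : Y) (x' : X) (y' : Y) (t : ℝ) :
    ‖L x y x' y' t - L x y x' y' 0‖ ≤ c * |t| := by
  simpa using hL_lip x y x' y' 0 t

variable [MeasurableSpace X] [MeasurableSpace Y] {P : Measure (X × Y)}

@[simp]
lemma shiftedRisk_zero : shiftedRisk L P 0 = 0 := by
  simp [shiftedRisk]

lemma ofReal_neg_shiftedRisk_le_lintegral (hL_nonneg : ∀ x y x' y' t, 0 ≤ L x y x' y' t)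
    (f : X × X → ℝ) :
    ENNReal.ofReal (-shiftedRisk L P f)
      ≤ ∫⁻ z : (X × Y) × (X × Y), ENNReal.ofReal (L z.1.1 z.1.2 z.2.1 z.2.2 0) ∂(P.prod P) := by
  rw [shiftedRisk, ← integral_neg]
  refine (ofReal_integral_le_lintegral_ofReal _).trans (lintegral_mono fun z => ?_)
  have := hL_nonneg z.1.1 z.1.2 z.2.1 z.2.2 (f (z.1.1, z.2.1))
  exact ENNReal.ofReal_le_ofReal (by linarith)

lemma abs_shiftedRisk_le_integral
    (hL_lip : ∀ x y x' y' s t, |L x y x' y' t - L x y x' y' s| ≤ c * |t - s|)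
    {f : X × X → ℝ} (hf : Integrable (fun z : (X × Y) × (X × Y) => f (z.1.1, z.2.1)) (P.prod P)) :
    |shiftedRisk L P f| ≤ c * ∫ z : (X × Y) × (X × Y), |f (z.1.1, z.2.1)| ∂(P.prod P) := by
  rw [← integral_const_mul]
  exact norm_integral_le_of_norm_le (hf.abs.const_mul c)
    (Filter.Eventually.of_forall fun z => norm_shiftedLoss_le hL_lip _ _ _ _ _)

lemma abs_shiftedRisk_le_of_abs_le [IsProbabilityMeasure P] (hc : 0 ≤ c)
    (hL_lip : ∀ x y x' y' s t, |L x y x' y' t - L x y x' y' s| ≤ c * |t - s|)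
    {f : X × X → ℝ} {C : ℝ} (hfC : ∀ p, |f p| ≤ C) : |shiftedRisk L P f| ≤ c * C := by
  simpa [shiftedRisk] using norm_integral_le_of_norm_le_const (μ := P.prod P)
    (Filter.Eventually.of_forall fun z =>
      (norm_shiftedLoss_le hL_lip _ _ _ _ _).trans (mul_le_mul_of_nonneg_left (hfC _) hc))

end ShiftedRisk

section Minimizer

variable {X Y H : Type*} [MeasurableSpace X] [MeasurableSpace Y]
  [NormedAddCommGroup H] [InnerProductSpace ℝ H]
  {L : X → Y → X → Y → ℝ → ℝ} {Φ : X × X → H} {P : Measure (X × Y)} {lam : ℝ}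

@[simp]
lemma regRisk_zero : regRisk L Φ P lam 0 = 0 := by
  simp [regRisk]

lemma mul_norm_sq_le_neg_shiftedRisk {fP : H}
    (hfP : ∀ g : H, regRisk L Φ P lam fP ≤ regRisk L Φ P lam g) :
    lam * ‖fP‖ ^ 2 ≤ -shiftedRisk L P (fhat Φ fP) := by
  have := hfP 0
  rw [regRisk_zero, regRisk] at this
  linarith

lemma abs_fhat_le_of_mul_norm_sq_le [IsProbabilityMeasure P] {c kb : ℝ} (hc : 0 ≤ c)
    (hlam : 0 < lam) {f : H}
    (hf : lam * ‖f‖ ^ 2 ≤ c * ∫ z : (X × Y) × (X × Y), |fhat Φ f (z.1.1, z.2.1)| ∂(P.prod P))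
    (hkb : ∀ p, ‖Φ p‖ ≤ kb) (p : X × X) : |fhat Φ f p| ≤ lam⁻¹ * c * kb ^ 2 := by
  have hkb0 : 0 ≤ kb := (norm_nonneg _).trans (hkb p)
  have hbound : ∀ q, |fhat Φ f q| ≤ ‖f‖ * kb := fun q =>
    (abs_fhat_le Φ f q).trans (mul_le_mul_of_nonneg_left (hkb q) (norm_nonneg _))
  have hnorm : ‖f‖ ≤ lam⁻¹ * (c * kb) := by
    refine le_inv_mul_of_mul_sq_le_mul hlam (by positivity) (norm_nonneg _) ?_
    calc lam * ‖f‖ ^ 2 ≤ c * (‖f‖ * kb) :=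
          hf.trans (mul_le_mul_of_nonneg_left (integral_le_of_abs_le fun z => by
            simpa using hbound (z.1.1, z.2.1)) hc)
      _ = c * kb * ‖f‖ := by ring
  calc |fhat Φ f p| ≤ ‖f‖ * kb := hbound p
    _ ≤ lam⁻¹ * (c * kb) * kb := mul_le_mul_of_nonneg_right hnorm hkb0
    _ = lam⁻¹ * c * kb ^ 2 := by ring

end Minimizer

theorem regularized_minimizer_inequalities_general
    {X Y H : Type*} [MeasurableSpace X] [MeasurableSpace Y]
    [NormedAddCommGroup H] [InnerProductSpace ℝ H]
    (L : X → Y → X → Y → ℝ → ℝ)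
    (hL_nonneg : ∀ x y x' y' t, 0 ≤ L x y x' y' t)
    (c : ℝ) (hc : 0 ≤ c)
    (hL_lip : ∀ x y x' y' s t, |L x y x' y' t - L x y x' y' s| ≤ c * |t - s|)
    (Φ : X × X → H)
    (P : Measure (X × Y)) [IsProbabilityMeasure P]
    (lam : ℝ) (hlam : 0 < lam)
    (hint : ∀ g : H, Integrable (fun z : (X × Y) × (X × Y) => fhat Φ g (z.1.1, z.2.1)) (P.prod P))
    (fP : H) (hfP : ∀ g : H, regRisk L Φ P lam fP ≤ regRisk L Φ P lam g) :
    (lam * ‖fP‖ ^ 2 ≤ -(shiftedRisk L P (fhat Φ fP))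
      ∧ ENNReal.ofReal (-(shiftedRisk L P (fhat Φ fP)))
          ≤ ∫⁻ z : (X × Y) × (X × Y), ENNReal.ofReal (L z.1.1 z.1.2 z.2.1 z.2.2 0) ∂(P.prod P))
    ∧ (lam * ‖fP‖ ^ 2 ≤ c * ∫ z : (X × Y) × (X × Y), |fhat Φ fP (z.1.1, z.2.1)| ∂(P.prod P))
    ∧ (∀ kb : ℝ, (∀ p : X × X, ‖Φ p‖ ≤ kb) →
        (∀ p : X × X, |fhat Φ fP p| ≤ lam⁻¹ * c * kb ^ 2)
        ∧ |shiftedRisk L P (fhat Φ fP)| ≤ lam⁻¹ * c ^ 2 * kb ^ 2) := by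
  have hmin := mul_norm_sq_le_neg_shiftedRisk hfP
  have hii : lam * ‖fP‖ ^ 2 ≤ c * ∫ z, |fhat Φ fP (z.1.1, z.2.1)| ∂(P.prod P) :=
    hmin.trans ((neg_le_abs _).trans (abs_shiftedRisk_le_integral hL_lip (hint fP)))
  refine ⟨⟨hmin, ofReal_neg_shiftedRisk_le_lintegral hL_nonneg _⟩, hii, fun kb hkb => ?_⟩
  have hsup := abs_fhat_le_of_mul_norm_sq_le hc hlam hii hkb
  refine ⟨hsup, ?_⟩
  calc |shiftedRisk L P (fhat Φ fP)| ≤ c * (lam⁻¹ * c * kb ^ 2) :=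
        abs_shiftedRisk_le_of_abs_le hc hL_lip hsup
    _ = lam⁻¹ * c ^ 2 * kb ^ 2 := by ring

/-- **Inequalities for the regularized minimizer** (Lemma 2.12 (iv)). Let `L` be Lipschitz
with constant `|L|₁ = c`, `λ > 0` and let `f_P` minimize the regularized shifted risk over `H`.
Then (i) `λ‖f_P‖² ≤ -R_{L*,P}(f̂_P) ≤ R_{L,P}(0)`;
(ii) `λ‖f_P‖² ≤ |L|₁ ∫ |f̂_P| d(P⊗P)`;
(iii) if `‖Φ(x,x')‖ ≤ ‖k‖_∞ < ∞` for all `(x,x')`, then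
`‖f̂_P‖_∞ ≤ λ⁻¹ |L|₁ ‖k‖_∞²` and `|R_{L*,P}(f̂_P)| ≤ λ⁻¹ |L|₁² ‖k‖_∞²`. -/
theorem regularized_minimizer_inequalities
    {X Y H : Type*} [MeasurableSpace X] [MeasurableSpace Y]
    [NormedAddCommGroup H] [InnerProductSpace ℝ H] [CompleteSpace H]
    [MeasurableSpace H] [BorelSpace H]
    (L : X → Y → X → Y → ℝ → ℝ)
    (hL_meas : Measurable fun p : (X × Y) × (X × Y) × ℝ => L p.1.1 p.1.2 p.2.1.1 p.2.1.2 p.2.2)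
    (hL_nonneg : ∀ x y x' y' t, 0 ≤ L x y x' y' t)
    (c : ℝ) (hc : 0 ≤ c)
    (hL_lip : ∀ x y x' y' s t, |L x y x' y' t - L x y x' y' s| ≤ c * |t - s|)
    (Φ : X × X → H) (hΦ : Measurable Φ)
    (P : Measure (X × Y)) [IsProbabilityMeasure P]
    (lam : ℝ) (hlam : 0 < lam)
    (hint : ∀ g : H, Integrable (fun z : (X × Y) × (X × Y) => fhat Φ g (z.1.1, z.2.1)) (P.prod P))
    (fP : H) (hfP : ∀ g : H, regRisk L Φ P lam fP ≤ regRisk L Φ P lam g) :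
    (lam * ‖fP‖ ^ 2 ≤ -(shiftedRisk L P (fhat Φ fP))
      ∧ ENNReal.ofReal (-(shiftedRisk L P (fhat Φ fP)))
          ≤ ∫⁻ z : (X × Y) × (X × Y), ENNReal.ofReal (L z.1.1 z.1.2 z.2.1 z.2.2 0) ∂(P.prod P))
    ∧ (lam * ‖fP‖ ^ 2 ≤ c * ∫ z : (X × Y) × (X × Y), |fhat Φ fP (z.1.1, z.2.1)| ∂(P.prod P))
    ∧ (∀ kb : ℝ, (∀ p : X × X, ‖Φ p‖ ≤ kb) →
        (∀ p : X × X, |fhat Φ fP p| ≤ lam⁻¹ * c * kb ^ 2)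
        ∧ |shiftedRisk L P (fhat Φ fP)| ≤ lam⁻¹ * c ^ 2 * kb ^ 2) :=
  regularized_minimizer_inequalities_general L hL_nonneg c hc hL_lip Φ P lam hlam hint fP hfP
end

section
/- Let L be a pairwise loss function such that t ↦ L(x,y,x',y',t) is convex for every (x,y,x',y'), and suppose L is Lipschitz continuous with constant |L|₁ and that f̂ ∈ L¹(P_X ⊗ P_X) for every f ∈ H. Then for every λ > 0 there exists at most one minimizer of the regularized shifted risk R^reg_{L*,P,λ} over H; i.e., if f₁, f₂ ∈ H both minimize R^reg_{L*,P,λ}, then f₁ = f₂. -/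
/-!
The shifted risk is the integral of a convex function of `f̂`, and `f ↦ f̂` is linear, so
`f ↦ R_{L*,P}(f̂)` is convex on `H`; the Lipschitz bound `|L*(·, t)| ≤ |L|₁ |t|` makes every
integrand integrable, so that Jensen's inequality can be integrated. Adding the strictly convex
regularizer `λ‖f‖²` gives a strictly convex functional, which has at most one minimizer.
-/

open MeasureTheory

open Set

lemma MeasureTheory.Integrable.comp_prodMap {α β γ δ E : Type*} [MeasurableSpace α]
    [MeasurableSpace β] [MeasurableSpace γ] [MeasurableSpace δ] [NormedAddCommGroup E]
    {μ : Measure α} {ν : Measure β} [SFinite μ] [SFinite ν] {f : α → γ} {g : β → δ}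
    (hf : Measurable f) (hg : Measurable g) {F : γ × δ → E}
    (hF : Integrable F ((μ.map f).prod (ν.map g))) :
    Integrable (F ∘ Prod.map f g) (μ.prod ν) := by
  rw [Measure.map_prod_map μ ν hf hg] at hF
  exact hF.comp_measurable (hf.prodMap hg)

lemma StrictConvexOn.const_mul {E : Type*} [AddCommMonoid E] [Module ℝ E] {s : Set E}
    {f : E → ℝ} (hf : StrictConvexOn ℝ s f) {c : ℝ} (hc : 0 < c) :
    StrictConvexOn ℝ s fun x => c * f x := by
  refine ⟨hf.1, fun x hx y hy hxy a b ha hb hab => ?_⟩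
  have h := mul_lt_mul_of_pos_left (hf.2 hx hy hxy ha hb hab) hc
  simp only [smul_eq_mul] at h ⊢
  linarith

lemma strictConvexOn_norm_sq {E : Type*} [NormedAddCommGroup E] [InnerProductSpace ℝ E] :
    StrictConvexOn ℝ univ fun x : E => ‖x‖ ^ 2 := by
  refine ⟨convex_univ, fun x _ y _ hxy a b ha hb hab => ?_⟩
  have hdefect : ‖a • x + b • y‖ ^ 2 = a * ‖x‖ ^ 2 + b * ‖y‖ ^ 2 - a * b * ‖x - y‖ ^ 2 := by
    rw [norm_add_sq_real, norm_sub_sq_real, norm_smul, norm_smul, real_inner_smul_left,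
      real_inner_smul_right, Real.norm_of_nonneg ha.le, Real.norm_of_nonneg hb.le]
    obtain rfl : b = 1 - a := by linarith
    ring
  have hxy' : 0 < ‖x - y‖ := norm_pos_iff.2 (sub_ne_zero.2 hxy)
  simp only [smul_eq_mul]
  rw [hdefect]
  nlinarith [mul_pos (mul_pos ha hb) (pow_pos hxy' 2)]

section IntegratedLoss

variable {Ω : Type*} [MeasurableSpace Ω] {μ : Measure Ω} {ℓ : Ω → ℝ → ℝ} {c : ℝ}

lemma integrable_sub_zero_of_lipschitz (hℓ_meas : Measurable (Function.uncurry ℓ))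
    (hℓ_lip : ∀ ω s t, |ℓ ω t - ℓ ω s| ≤ c * |t - s|) {g : Ω → ℝ} (hg : Integrable g μ) :
    Integrable (fun ω => ℓ ω (g ω) - ℓ ω 0) μ := by
  have hmeas : AEStronglyMeasurable (fun ω => ℓ ω (g ω) - ℓ ω 0) μ :=
    ((hℓ_meas.comp_aemeasurable (aemeasurable_id.prodMk hg.aemeasurable)).sub
      (hℓ_meas.comp_aemeasurable (aemeasurable_id.prodMk aemeasurable_const))).aestronglyMeasurable
  refine (hg.abs.const_mul c).mono' hmeas (Filter.Eventually.of_forall fun ω => ?_)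
  simpa only [Real.norm_eq_abs, sub_zero] using hℓ_lip ω 0 (g ω)

lemma convexOn_integral_sub_zero (hℓ_meas : Measurable (Function.uncurry ℓ))
    (hℓ_convex : ∀ ω, ConvexOn ℝ univ (ℓ ω)) (hℓ_lip : ∀ ω s t, |ℓ ω t - ℓ ω s| ≤ c * |t - s|) :
    ConvexOn ℝ {g : Ω → ℝ | Integrable g μ} fun g => ∫ ω, ℓ ω (g ω) - ℓ ω 0 ∂μ := by
  have hset : Convex ℝ {g : Ω → ℝ | Integrable g μ} :=
    fun g₁ hg₁ g₂ hg₂ a b _ _ _ => (hg₁.smul a).add (hg₂.smul b)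
  refine ⟨hset, fun g₁ hg₁ g₂ hg₂ a b ha hb hab => ?_⟩
  have hint := fun g (hg : Integrable g μ) => integrable_sub_zero_of_lipschitz hℓ_meas hℓ_lip hg
  have hjensen : ∀ ω, ℓ ω ((a • g₁ + b • g₂) ω) - ℓ ω 0
      ≤ a * (ℓ ω (g₁ ω) - ℓ ω 0) + b * (ℓ ω (g₂ ω) - ℓ ω 0) := fun ω => by
    have h := (hℓ_convex ω).2 (mem_univ (g₁ ω)) (mem_univ (g₂ ω)) ha hb hab
    simp only [Pi.add_apply, Pi.smul_apply, smul_eq_mul] at h ⊢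
    linear_combination h + (ℓ ω 0) * hab
  calc ∫ ω, ℓ ω ((a • g₁ + b • g₂) ω) - ℓ ω 0 ∂μ
      ≤ ∫ ω, a * (ℓ ω (g₁ ω) - ℓ ω 0) + b * (ℓ ω (g₂ ω) - ℓ ω 0) ∂μ :=
        integral_mono (hint _ (hset hg₁ hg₂ ha hb hab))
          (((hint _ hg₁).const_mul a).add ((hint _ hg₂).const_mul b)) hjensen
    _ = a • ∫ ω, ℓ ω (g₁ ω) - ℓ ω 0 ∂μ + b • ∫ ω, ℓ ω (g₂ ω) - ℓ ω 0 ∂μ := by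
        rw [integral_add ((hint _ hg₁).const_mul a) ((hint _ hg₂).const_mul b),
          integral_const_mul, integral_const_mul, smul_eq_mul, smul_eq_mul]

end IntegratedLoss

section RKHS

variable {X Y H : Type*} [NormedAddCommGroup H] [InnerProductSpace ℝ H]

noncomputable def fhatLinearMap (Φ : X × X → H) : H →ₗ[ℝ] X × X → ℝ where
  toFun := fhat Φ
  map_add' f g := funext fun p => inner_add_left f g (Φ p)
  map_smul' a f := funext fun p => real_inner_smul_left f (Φ p) a

variable [MeasurableSpace X] [MeasurableSpace Y]

lemma convexOn_shiftedRisk_fhat {L : X → Y → X → Y → ℝ → ℝ}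
    (hL_meas : Measurable fun p : (X × Y) × (X × Y) × ℝ => L p.1.1 p.1.2 p.2.1.1 p.2.1.2 p.2.2)
    (hL_convex : ∀ x y x' y', ConvexOn ℝ univ (L x y x' y'))
    {c : ℝ} (hL_lip : ∀ x y x' y' s t, |L x y x' y' t - L x y x' y' s| ≤ c * |t - s|)
    {Φ : X × X → H} {P : Measure (X × Y)} [SFinite P]
    (hint : ∀ f : H, Integrable (fhat Φ f) ((P.map Prod.fst).prod (P.map Prod.fst))) :
    ConvexOn ℝ univ fun f => shiftedRisk L P (fhat Φ f) := by
  let ℓ : (X × Y) × (X × Y) → ℝ → ℝ := fun z => L z.1.1 z.1.2 z.2.1 z.2.2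
  have hℓ_meas : Measurable (Function.uncurry ℓ) :=
    hL_meas.comp (measurable_fst.fst.prodMk (measurable_fst.snd.prodMk measurable_snd))
  have hconv := (convexOn_integral_sub_zero (μ := P.prod P) hℓ_meas
    (fun z => hL_convex _ _ _ _) (fun z => hL_lip _ _ _ _)).comp_linearMap
    ((LinearMap.funLeft ℝ ℝ (Prod.map Prod.fst Prod.fst)).comp (fhatLinearMap Φ))
  have hdom : (LinearMap.funLeft ℝ ℝ (Prod.map Prod.fst Prod.fst)).comp (fhatLinearMap Φ) ⁻¹'
      {g | Integrable g (P.prod P)} = univ :=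
    eq_univ_of_forall fun f => (hint f).comp_prodMap measurable_fst measurable_fst
  rwa [hdom] at hconv

end RKHS

theorem regularized_minimizer_unique_general
    {X Y H : Type*} [MeasurableSpace X] [MeasurableSpace Y]
    [NormedAddCommGroup H] [InnerProductSpace ℝ H]
    (L : X → Y → X → Y → ℝ → ℝ)
    (hL_meas : Measurable fun p : (X × Y) × (X × Y) × ℝ => L p.1.1 p.1.2 p.2.1.1 p.2.1.2 p.2.2)
    (hL_convex : ∀ x y x' y', ConvexOn ℝ Set.univ (L x y x' y'))
    (c : ℝ)
    (hL_lip : ∀ x y x' y' s t, |L x y x' y' t - L x y x' y' s| ≤ c * |t - s|)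
    (Φ : X × X → H)
    (P : Measure (X × Y)) [IsProbabilityMeasure P]
    (hint : ∀ f : H, Integrable (fhat Φ f) ((P.map Prod.fst).prod (P.map Prod.fst)))
    (lam : ℝ) (hlam : 0 < lam)
    (f₁ f₂ : H)
    (hf₁ : ∀ g : H, regRisk L Φ P lam f₁ ≤ regRisk L Φ P lam g)
    (hf₂ : ∀ g : H, regRisk L Φ P lam f₂ ≤ regRisk L Φ P lam g) :
    f₁ = f₂ := by
  have hstrict : StrictConvexOn ℝ univ (regRisk L Φ P lam) :=
    (convexOn_shiftedRisk_fhat hL_meas hL_convex hL_lip hint).add_strictConvexOn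
      (strictConvexOn_norm_sq.const_mul hlam)
  exact hstrict.eq_of_isMinOn (isMinOn_univ_iff.2 hf₁) (isMinOn_univ_iff.2 hf₂)
    (mem_univ _) (mem_univ _)

/-- **Uniqueness of the regularized minimizer.** If `L` is convex in its fifth argument,
Lipschitz continuous, and `f̂ ∈ L¹(P_X ⊗ P_X)` for every `f ∈ H`, then for every `λ > 0`
there is at most one minimizer of the regularized shifted risk over `H`. -/
theorem regularized_minimizer_unique
    {X Y H : Type*} [MeasurableSpace X] [MeasurableSpace Y]
    [NormedAddCommGroup H] [InnerProductSpace ℝ H] [CompleteSpace H]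
    [MeasurableSpace H] [BorelSpace H]
    (L : X → Y → X → Y → ℝ → ℝ)
    (hL_meas : Measurable fun p : (X × Y) × (X × Y) × ℝ => L p.1.1 p.1.2 p.2.1.1 p.2.1.2 p.2.2)
    (hL_nonneg : ∀ x y x' y' t, 0 ≤ L x y x' y' t)
    (hL_convex : ∀ x y x' y', ConvexOn ℝ Set.univ (L x y x' y'))
    (c : ℝ) (hc : 0 ≤ c)
    (hL_lip : ∀ x y x' y' s t, |L x y x' y' t - L x y x' y' s| ≤ c * |t - s|)
    (Φ : X × X → H) (hΦ : Measurable Φ)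
    (P : Measure (X × Y)) [IsProbabilityMeasure P]
    (hint : ∀ f : H, Integrable (fhat Φ f) ((P.map Prod.fst).prod (P.map Prod.fst)))
    (lam : ℝ) (hlam : 0 < lam)
    (f₁ f₂ : H)
    (hf₁ : ∀ g : H, regRisk L Φ P lam f₁ ≤ regRisk L Φ P lam g)
    (hf₂ : ∀ g : H, regRisk L Φ P lam f₂ ≤ regRisk L Φ P lam g) :
    f₁ = f₂ :=
  regularized_minimizer_unique_general L hL_meas hL_convex c hL_lip Φ P hint lam hlam f₁ f₂ hf₁ hf₂
end

section
/- Let L be a pairwise loss function that is Lipschitz continuous (not necessarily convex) and continuous in its fifth argument, let P be a Borel probability measure on X×Y, let Φ : X×X → H be measurable with ‖k‖_∞ := sup_{(x,x')} ‖Φ(x,x')‖_H < ∞, and suppose R_{L,P}(f̂₀) < ∞ for some f₀ ∈ H. Then for every λ > 0 there exists a minimizer f* ∈ H of the regularized (unshifted) risk f ↦ R_{L,P}(f̂) + λ‖f‖²_H over H. -/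
/-! The direct method of the calculus of variations, with no convexity. Since
`λ‖f‖² ≤ R(f̂) + λ‖f‖²`, a minimizing sequence is bounded in `H`, so a subsequence converges
weakly to some `f*`. Weak convergence `fₖ ⇀ f*` gives pointwise convergence
`f̂ₖ(x,x') = ⟪fₖ, Φ(x,x')⟫ → f̂*(x,x')`; continuity of `L` in its last argument and Fatou's
lemma then make the risk weakly sequentially lower semicontinuous, and so is `‖·‖²`.
Hence `f*` attains the infimum. -/

open MeasureTheory ENNReal

/-- The `[0,∞]`-valued (unshifted) `L`-risk of the function induced by `f ∈ H`. -/
noncomputable def riskENN {X Y H : Type*} [MeasurableSpace X] [MeasurableSpace Y]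
    [NormedAddCommGroup H] [InnerProductSpace ℝ H]
    (L : X → Y → X → Y → ℝ → ℝ) (Φ : X × X → H) (P : Measure (X × Y)) (f : H) : ℝ≥0∞ :=
  ∫⁻ z : (X × Y) × (X × Y),
    ENNReal.ofReal (L z.1.1 z.1.2 z.2.1 z.2.2 (fhat Φ f (z.1.1, z.2.1))) ∂(P.prod P)

open Filter Topology RealInnerProductSpace

theorem ENNReal.liminf_add_liminf_le (u v : ℕ → ℝ≥0∞) :
    liminf u atTop + liminf v atTop ≤ liminf (u + v) atTop := by
  simp only [liminf_eq_iSup_iInf_of_nat]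
  refine ENNReal.iSup_add_iSup_le fun m n => le_iSup_of_le (max m n) <| le_iInf₂ fun i hi => ?_
  exact add_le_add (iInf₂_le i (le_of_max_le_left hi)) (iInf₂_le i (le_of_max_le_right hi))

section WeakConvergence

variable {H : Type*} [NormedAddCommGroup H] [InnerProductSpace ℝ H]

def TendstoWeakly (f : ℕ → H) (g : H) : Prop :=
  ∀ v : H, Tendsto (fun k => ⟪f k, v⟫) atTop (𝓝 ⟪g, v⟫)

/-- Sequential Banach–Alaoglu is applied on the closed span `V` of the sequence, which is
separable; Riesz representation turns the weak-* limit into `g ∈ V`, and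
`⟪f n, v⟫ = ⟪f n, P_V v⟫` extends the convergence to all `v ∈ H`. -/
theorem exists_strictMono_tendstoWeakly [CompleteSpace H] {f : ℕ → H} {C : ℝ}
    (hC : ∀ n, ‖f n‖ ≤ C) : ∃ (g : H) (φ : ℕ → ℕ), StrictMono φ ∧ TendstoWeakly (f ∘ φ) g := by
  set V : Submodule ℝ H := (Submodule.span ℝ (Set.range f)).topologicalClosure
  have : TopologicalSpace.SeparableSpace V :=
    ((Set.countable_range f).isSeparable.span.closure).separableSpace
  have hfV : ∀ n, f n ∈ V := fun n =>
    Submodule.le_topologicalClosure _ (Submodule.subset_span ⟨n, rfl⟩)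
  let x : ℕ → WeakDual ℝ V := fun n => (InnerProductSpace.toDual ℝ V ⟨f n, hfV n⟩).toWeakDual
  have hx : ∀ n, x n ∈ WeakDual.toStrongDual ⁻¹' Metric.closedBall 0 C := fun n =>
    mem_closedBall_zero_iff.2 <| ((InnerProductSpace.toDual ℝ V).norm_map _).trans_le (hC n)
  obtain ⟨ℓ, -, φ, hφ, hlim⟩ := WeakDual.isSeqCompact_closedBall ℝ V 0 C hx
  refine ⟨(InnerProductSpace.toDual ℝ V).symm ℓ.toStrongDual, φ, hφ, fun v => ?_⟩
  have hℓ := ((WeakDual.eval_continuous (V.orthogonalProjectionOnto v)).tendsto ℓ).comp hlim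
  rw [← Submodule.inner_orthogonalProjectionOnto_eq_of_mem_left,
    InnerProductSpace.toDual_symm_apply]
  simpa [x, Function.comp_def] using hℓ

theorem TendstoWeakly.ofReal_mul_norm_sq_le_liminf {f : ℕ → H} {g : H} (hfg : TendstoWeakly f g)
    {lam : ℝ} (hlam : 0 ≤ lam) :
    ENNReal.ofReal (lam * ‖g‖ ^ 2) ≤ liminf (fun k => ENNReal.ofReal (lam * ‖f k‖ ^ 2)) atTop := by
  have hlower : ∀ k, lam * (2 * ⟪f k, g⟫ - ‖g‖ ^ 2) ≤ lam * ‖f k‖ ^ 2 := fun k =>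
    mul_le_mul_of_nonneg_left (by nlinarith [norm_sub_sq_real (f k) g, sq_nonneg ‖f k - g‖]) hlam
  have hlim : Tendsto (fun k => ENNReal.ofReal (lam * (2 * ⟪f k, g⟫ - ‖g‖ ^ 2))) atTop
      (𝓝 (ENNReal.ofReal (lam * ‖g‖ ^ 2))) := by
    have := (((hfg g).const_mul 2).sub_const (‖g‖ ^ 2)).const_mul lam
    rw [real_inner_self_eq_norm_sq, two_mul, add_sub_cancel_right] at this
    exact ENNReal.tendsto_ofReal this
  rw [← hlim.liminf_eq]
  exact liminf_le_liminf (Eventually.of_forall fun k => ENNReal.ofReal_le_ofReal (hlower k))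

theorem exists_forall_le_of_weakly_lsc_of_coercive [CompleteSpace H] {J : H → ℝ≥0∞}
    (hlsc : ∀ f g, TendstoWeakly f g → J g ≤ liminf (J ∘ f) atTop)
    (hcoercive : ∀ a ≠ ⊤, ∃ C, ∀ f, J f ≤ a → ‖f‖ ≤ C) : ∃ f, ∀ g, J f ≤ J g := by
  rcases eq_or_ne (⨅ g, J g) ⊤ with htop | hfin
  · exact ⟨0, fun g => (iInf_eq_top.1 htop g).symm ▸ le_top⟩
  obtain ⟨u, hu_anti, hu_lim, hu_mem⟩ :=
    exists_seq_tendsto_sInf (Set.range_nonempty J) (OrderBot.bddBelow _)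
  choose fs hfs using hu_mem
  rw [sInf_range] at hu_lim
  -- the minimizing sequence is bounded from the first index `N` at which `J` is finite
  obtain ⟨N, hN⟩ := (hu_lim.eventually (gt_mem_nhds hfin.lt_top)).exists
  obtain ⟨C, hC⟩ := hcoercive (u N) hN.ne
  obtain ⟨g, φ, hφ, hweak⟩ := exists_strictMono_tendstoWeakly (f := fun n => fs (n + N))
    fun n => hC _ ((hfs _).trans_le (hu_anti (Nat.le_add_left N n)))
  have hJ_lim : Tendsto (J ∘ fun k => fs (φ k + N)) atTop (𝓝 (⨅ g, J g)) := by
    simpa only [Function.comp_def, hfs] using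
      hu_lim.comp ((tendsto_add_atTop_nat N).comp hφ.tendsto_atTop)
  exact ⟨g, fun h => (hlsc _ g hweak).trans_eq hJ_lim.liminf_eq |>.trans (iInf_le J h)⟩

end WeakConvergence

section Risk

variable {X Y H : Type*} [MeasurableSpace X] [MeasurableSpace Y]
  [NormedAddCommGroup H] [InnerProductSpace ℝ H]
  {L : X → Y → X → Y → ℝ → ℝ} {Φ : X × X → H} {P : Measure (X × Y)}

noncomputable def regularizedRiskENN (L : X → Y → X → Y → ℝ → ℝ) (Φ : X × X → H)
    (P : Measure (X × Y)) (lam : ℝ) (f : H) : ℝ≥0∞ :=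
  riskENN L Φ P f + ENNReal.ofReal (lam * ‖f‖ ^ 2)

theorem measurable_ofReal_loss_fhat [MeasurableSpace H] [BorelSpace H]
    (hL_meas : Measurable fun p : (X × Y) × (X × Y) × ℝ => L p.1.1 p.1.2 p.2.1.1 p.2.1.2 p.2.2)
    (hΦ : Measurable Φ) (f : H) :
    Measurable fun z : (X × Y) × (X × Y) =>
      ENNReal.ofReal (L z.1.1 z.1.2 z.2.1 z.2.2 (fhat Φ f (z.1.1, z.2.1))) := by
  have hfhat : Measurable (fhat Φ f) := (continuous_const.inner continuous_id).measurable.comp hΦ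
  exact ENNReal.measurable_ofReal.comp <| hL_meas.comp <| measurable_fst.prodMk <|
    measurable_snd.prodMk <| hfhat.comp <| measurable_fst.fst.prodMk measurable_snd.fst

theorem TendstoWeakly.riskENN_le_liminf [MeasurableSpace H] [BorelSpace H]
    (hL_meas : Measurable fun p : (X × Y) × (X × Y) × ℝ => L p.1.1 p.1.2 p.2.1.1 p.2.1.2 p.2.2)
    (hL_cont : ∀ x y x' y', Continuous (L x y x' y')) (hΦ : Measurable Φ)
    {f : ℕ → H} {g : H} (hfg : TendstoWeakly f g) :
    riskENN L Φ P g ≤ liminf (fun k => riskENN L Φ P (f k)) atTop :=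
  calc riskENN L Φ P g
      = ∫⁻ z, liminf (fun k =>
          ENNReal.ofReal (L z.1.1 z.1.2 z.2.1 z.2.2 (fhat Φ (f k) (z.1.1, z.2.1)))) atTop
          ∂(P.prod P) := by
        refine lintegral_congr fun z => (Tendsto.liminf_eq ?_).symm
        exact ENNReal.tendsto_ofReal (((hL_cont _ _ _ _).tendsto _).comp (hfg _))
    _ ≤ _ := lintegral_liminf_le fun k => measurable_ofReal_loss_fhat hL_meas hΦ (f k)

theorem TendstoWeakly.regularizedRiskENN_le_liminf [MeasurableSpace H] [BorelSpace H]
    (hL_meas : Measurable fun p : (X × Y) × (X × Y) × ℝ => L p.1.1 p.1.2 p.2.1.1 p.2.1.2 p.2.2)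
    (hL_cont : ∀ x y x' y', Continuous (L x y x' y')) (hΦ : Measurable Φ)
    {lam : ℝ} (hlam : 0 ≤ lam) {f : ℕ → H} {g : H} (hfg : TendstoWeakly f g) :
    regularizedRiskENN L Φ P lam g
      ≤ liminf (fun k => regularizedRiskENN L Φ P lam (f k)) atTop :=
  calc regularizedRiskENN L Φ P lam g
      ≤ liminf (fun k => riskENN L Φ P (f k)) atTop
        + liminf (fun k => ENNReal.ofReal (lam * ‖f k‖ ^ 2)) atTop :=
        add_le_add (hfg.riskENN_le_liminf hL_meas hL_cont hΦ)
          (hfg.ofReal_mul_norm_sq_le_liminf hlam)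
    _ ≤ _ := ENNReal.liminf_add_liminf_le _ _

theorem norm_le_of_regularizedRiskENN_le {lam : ℝ} (hlam : 0 < lam) {f : H} {a : ℝ≥0∞}
    (ha : a ≠ ⊤) (hf : regularizedRiskENN L Φ P lam f ≤ a) : ‖f‖ ≤ √(a.toReal / lam) := by
  have hreg : lam * ‖f‖ ^ 2 ≤ a.toReal :=
    (ENNReal.ofReal_le_iff_le_toReal ha).1 (le_add_self.trans hf)
  exact Real.le_sqrt_of_sq_le ((le_div_iff₀ hlam).2 (by linarith))

end Risk

theorem regularized_minimizer_exists_nonconvex_general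
    {X Y H : Type*} [MeasurableSpace X] [MeasurableSpace Y]
    [NormedAddCommGroup H] [InnerProductSpace ℝ H] [CompleteSpace H]
    [MeasurableSpace H] [BorelSpace H]
    (L : X → Y → X → Y → ℝ → ℝ)
    (hL_meas : Measurable fun p : (X × Y) × (X × Y) × ℝ => L p.1.1 p.1.2 p.2.1.1 p.2.1.2 p.2.2)
    (hL_cont : ∀ x y x' y', Continuous (L x y x' y'))
    (Φ : X × X → H) (hΦ : Measurable Φ)
    (P : Measure (X × Y))
    (lam : ℝ) (hlam : 0 < lam) :
    ∃ f : H, ∀ g : H,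
      riskENN L Φ P f + ENNReal.ofReal (lam * ‖f‖ ^ 2)
        ≤ riskENN L Φ P g + ENNReal.ofReal (lam * ‖g‖ ^ 2) := by
  exact exists_forall_le_of_weakly_lsc_of_coercive
    (fun f g hfg => hfg.regularizedRiskENN_le_liminf hL_meas hL_cont hΦ hlam.le)
    fun a ha => ⟨_, fun f => norm_le_of_regularizedRiskENN_le hlam ha⟩

/-- **Existence of the regularized minimizer without convexity.** If `L` is Lipschitz
continuous (and continuous in its fifth argument), the kernel is bounded, and
`R_{L,P}(f̂₀) < ∞` for some `f₀ ∈ H`, then for every `λ > 0` there exists a minimizer of the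
regularized (unshifted) risk `f ↦ R_{L,P}(f̂) + λ‖f‖²` over `H`. -/
theorem regularized_minimizer_exists_nonconvex
    {X Y H : Type*} [MeasurableSpace X] [MeasurableSpace Y]
    [NormedAddCommGroup H] [InnerProductSpace ℝ H] [CompleteSpace H]
    [MeasurableSpace H] [BorelSpace H]
    (L : X → Y → X → Y → ℝ → ℝ)
    (hL_meas : Measurable fun p : (X × Y) × (X × Y) × ℝ => L p.1.1 p.1.2 p.2.1.1 p.2.1.2 p.2.2)
    (hL_nonneg : ∀ x y x' y' t, 0 ≤ L x y x' y' t)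
    (hL_cont : ∀ x y x' y', Continuous (L x y x' y'))
    (c : ℝ) (hc : 0 ≤ c)
    (hL_lip : ∀ x y x' y' s t, |L x y x' y' t - L x y x' y' s| ≤ c * |t - s|)
    (Φ : X × X → H) (hΦ : Measurable Φ)
    (kb : ℝ) (hkb : ∀ p : X × X, ‖Φ p‖ ≤ kb)
    (P : Measure (X × Y)) [IsProbabilityMeasure P]
    (f₀ : H) (hf₀ : riskENN L Φ P f₀ < ⊤)
    (lam : ℝ) (hlam : 0 < lam) :
    ∃ f : H, ∀ g : H,
      riskENN L Φ P f + ENNReal.ofReal (lam * ‖f‖ ^ 2)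
        ≤ riskENN L Φ P g + ENNReal.ofReal (lam * ‖g‖ ^ 2) :=
  regularized_minimizer_exists_nonconvex_general L hL_meas hL_cont Φ hΦ P lam hlam
end

section
/- Let L be a pairwise loss function that is Lipschitz continuous with constant |L|₁ and convex in its fifth argument, let H be a separable real Hilbert space, Φ : X×X → H measurable with ‖k‖_∞ := sup ‖Φ(x,x')‖_H < ∞, P a Borel probability measure on X×Y, λ > 0, and let f_P := f_{L*,P,λ} be the minimizer of the regularized shifted risk. Then there exists a bounded measurable function h : (X×Y)² → ℝ such that: (i) for all (x,y,x',y') and all v ∈ ℝ, h(x,y,x',y')·(v − f̂_P(x,x')) ≤ L*(x,y,x',y',v) − L*(x,y,x',y',f̂_P(x,x')) (h is a subgradient selection); (ii) f_P = −(2λ)⁻¹ ∫ h(x,y,x',y')·Φ(x,x') d(P⊗P) as a Bochner integral in H; (iii) |h(x,y,x',y')| ≤ |L|₁ for all (x,y,x',y'); and (iv) for every Borel probability measure Q on X×Y with minimizer f_Q := f_{L*,Q,λ}, ‖f_P − f_Q‖_H ≤ λ⁻¹ · ‖∫ h·Φ d(P⊗P) − ∫ h·Φ d(Q⊗Q)‖_H.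 -/
/-!
Minimality of `f_P` against the perturbations `f_P + s g`, `s ↓ 0`, gives
`⟪-2λ f_P, g⟫ ≤ ∫ max (∂⁻L ⋅ ĝ) (∂⁺L ⋅ ĝ) d(P⊗P)` for every `g ∈ H`, where `∂∓L` are the left
and right derivatives of `L` in its last argument at `f̂_P` (dominated convergence, using the
Lipschitz bound). The right-hand side is a sublinear functional of `ĝ ∈ L²(P⊗P)`, namely the
support function of the order interval `[∂⁻L, ∂⁺L]`. By Hahn–Banach, `ĝ ↦ ⟪-2λ f_P, g⟫` extends to
a linear functional on `L²` dominated by it; that functional is continuous, so Riesz represents it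
by some `h ∈ L²`, and testing the domination on `±𝟙_A` forces `∂⁻L ≤ h ≤ ∂⁺L` a.e. After
modification on a null set, `h` is a measurable subgradient selection with `|h| ≤ |L|₁` and
`∫ h Φ d(P⊗P) = -2λ f_P`. Integrating the subgradient inequality against `Q⊗Q` and using the
minimality of `f_Q` gives `λ ‖f_P - f_Q‖² ≤ ⟪f_Q - f_P, ∫ h Φ d(P⊗P) - ∫ h Φ d(Q⊗Q)⟫`.
-/

open MeasureTheory

open Filter Topology Set Function
open scoped RealInnerProductSpace NNReal ENNReal

lemma LipschitzWith.abs_slope_le {φ : ℝ → ℝ} {K : ℝ≥0} (hφ : LipschitzWith K φ) (a b : ℝ) :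
    |slope φ a b| ≤ K := by
  rcases eq_or_ne a b with rfl | hab
  · simp
  rw [slope_def_field, abs_div, div_le_iff₀ (abs_pos.2 (sub_ne_zero.2 hab.symm))]
  simpa [Real.dist_eq] using hφ.dist_le_mul b a

namespace ConvexOn

variable {φ : ℝ → ℝ} {t : ℝ}

lemma leftDeriv_le_rightDeriv (hφ : ConvexOn ℝ univ φ) (t : ℝ) :
    derivWithin φ (Iio t) t ≤ derivWithin φ (Ioi t) t :=
  hφ.leftDeriv_le_rightDeriv_of_mem_interior (by simp)

lemma neg_le_leftDeriv (hφ : ConvexOn ℝ univ φ) {K : ℝ≥0} (hK : LipschitzWith K φ) (t : ℝ) :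
    -(K : ℝ) ≤ derivWithin φ (Iio t) t :=
  (neg_le_of_abs_le (hK.abs_slope_le (t - 1) t)).trans
    (hφ.slope_le_leftDeriv_of_mem_interior trivial (by simp) (by linarith))

lemma rightDeriv_le (hφ : ConvexOn ℝ univ φ) {K : ℝ≥0} (hK : LipschitzWith K φ) (t : ℝ) :
    derivWithin φ (Ioi t) t ≤ K :=
  (hφ.rightDeriv_le_slope_of_mem_interior (by simp) trivial (by linarith : t < t + 1)).trans
    (le_of_abs_le (hK.abs_slope_le t (t + 1)))

lemma abs_leftDeriv_le (hφ : ConvexOn ℝ univ φ) {K : ℝ≥0} (hK : LipschitzWith K φ) (t : ℝ) :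
    |derivWithin φ (Iio t) t| ≤ K :=
  abs_le.2 ⟨hφ.neg_le_leftDeriv hK t, (hφ.leftDeriv_le_rightDeriv t).trans (hφ.rightDeriv_le hK t)⟩

lemma abs_rightDeriv_le (hφ : ConvexOn ℝ univ φ) {K : ℝ≥0} (hK : LipschitzWith K φ) (t : ℝ) :
    |derivWithin φ (Ioi t) t| ≤ K :=
  abs_le.2 ⟨(hφ.neg_le_leftDeriv hK t).trans (hφ.leftDeriv_le_rightDeriv t), hφ.rightDeriv_le hK t⟩

lemma mul_sub_le_sub (hφ : ConvexOn ℝ univ φ) {a : ℝ}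
    (hleft : derivWithin φ (Iio t) t ≤ a) (hright : a ≤ derivWithin φ (Ioi t) t) (v : ℝ) :
    a * (v - t) ≤ φ v - φ t := by
  rcases lt_trichotomy v t with hvt | rfl | htv
  · have h := (hφ.slope_le_leftDeriv_of_mem_interior trivial (by simp) hvt).trans hleft
    rw [slope_def_field, div_le_iff₀ (sub_pos.2 hvt)] at h
    linarith
  · simp
  · have h := hright.trans (hφ.rightDeriv_le_slope_of_mem_interior (by simp) trivial htv)
    rw [slope_def_field, le_div_iff₀ (sub_pos.2 htv)] at h
    linarith

lemma tendsto_slope_rightDeriv (hφ : ConvexOn ℝ univ φ) (t : ℝ) :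
    Tendsto (slope φ t) (𝓝[>] t) (𝓝 (derivWithin φ (Ioi t) t)) :=
  (hasDerivWithinAt_iff_tendsto_slope' self_notMem_Ioi).1
    (hφ.hasDerivWithinAt_rightDeriv_of_mem_interior (by simp))

lemma tendsto_slope_leftDeriv (hφ : ConvexOn ℝ univ φ) (t : ℝ) :
    Tendsto (slope φ t) (𝓝[<] t) (𝓝 (derivWithin φ (Iio t) t)) :=
  (hasDerivWithinAt_iff_tendsto_slope' self_notMem_Iio).1
    (hφ.hasDerivWithinAt_leftDeriv_of_mem_interior (by simp))

lemma tendsto_sub_div_nhdsGT (hφ : ConvexOn ℝ univ φ) (t u : ℝ) :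
    Tendsto (fun s => (φ (t + s * u) - φ t) / s) (𝓝[>] 0)
      (𝓝 (max (derivWithin φ (Iio t) t * u) (derivWithin φ (Ioi t) t * u))) := by
  have hline : Tendsto (fun s : ℝ => t + s * u) (𝓝[>] 0) (𝓝 t) := by
    have : Continuous fun s : ℝ => t + s * u := by fun_prop
    simpa using (this.tendsto 0).mono_left nhdsWithin_le_nhds
  have hslope : ∀ᶠ s in 𝓝[>] (0 : ℝ),
      slope φ t (t + s * u) * u = (φ (t + s * u) - φ t) / s := by
    filter_upwards [self_mem_nhdsWithin] with s (hs : 0 < s)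
    rcases eq_or_ne u 0 with rfl | hu
    · simp
    rw [slope_def_field, add_sub_cancel_left]
    field_simp
  have hmono := hφ.leftDeriv_le_rightDeriv t
  rcases lt_trichotomy u 0 with hu | rfl | hu
  · rw [max_eq_left (by nlinarith)]
    refine ((hφ.tendsto_slope_leftDeriv t).comp ?_).mul_const u |>.congr' hslope
    refine tendsto_nhdsWithin_of_tendsto_nhds_of_eventually_within _ hline ?_
    filter_upwards [self_mem_nhdsWithin] with s (hs : 0 < s)
    exact (show t + s * u < t by nlinarith)
  · simp
  · rw [max_eq_right (by nlinarith)]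
    refine ((hφ.tendsto_slope_rightDeriv t).comp ?_).mul_const u |>.congr' hslope
    refine tendsto_nhdsWithin_of_tendsto_nhds_of_eventually_within _ hline ?_
    filter_upwards [self_mem_nhdsWithin] with s (hs : 0 < s)
    exact (show t < t + s * u by nlinarith)

end ConvexOn

lemma max_mul_le_mul_abs {a b C : ℝ} (ha : |a| ≤ C) (hb : |b| ≤ C) (u : ℝ) :
    max (a * u) (b * u) ≤ C * |u| := by
  have key : ∀ c : ℝ, |c| ≤ C → c * u ≤ C * |u| := fun c hc =>
    (le_abs_self _).trans (by rw [abs_mul]; exact mul_le_mul_of_nonneg_right hc (abs_nonneg u))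
  exact max_le (key a ha) (key b hb)

/-- The support function `u ↦ sup {∫ h u dμ | Dm ≤ h ≤ Dp}` of the order interval `[Dm, Dp]`.
When `Dm, Dp` are the one-sided derivatives of a convex integrand, it is the one-sided
directional derivative of the integral. -/
noncomputable def orderIntervalSupport {Z : Type*} [MeasurableSpace Z] (μ : Measure Z)
    (Dm Dp u : Z → ℝ) : ℝ :=
  ∫ z, max (Dm z * u z) (Dp z * u z) ∂μ

section OrderIntervalSupport

variable {Z : Type*} [MeasurableSpace Z] {μ : Measure Z} {Dm Dp : Z → ℝ} {C : ℝ}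

lemma integrable_max_mul (hDm : Measurable Dm) (hDp : Measurable Dp) (hDmC : ∀ z, |Dm z| ≤ C)
    (hDpC : ∀ z, |Dp z| ≤ C) {u : Z → ℝ} (hu : Integrable u μ) :
    Integrable (fun z => max (Dm z * u z) (Dp z * u z)) μ :=
  (hu.bdd_mul hDm.aestronglyMeasurable (ae_of_all _ hDmC)).sup
    (hu.bdd_mul hDp.aestronglyMeasurable (ae_of_all _ hDpC))

lemma orderIntervalSupport_add_le
    (hint : ∀ u : Lp ℝ 2 μ, Integrable (fun z => max (Dm z * u z) (Dp z * u z)) μ)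
    (u v : Lp ℝ 2 μ) :
    orderIntervalSupport μ Dm Dp ⇑(u + v)
      ≤ orderIntervalSupport μ Dm Dp u + orderIntervalSupport μ Dm Dp v := by
  rw [orderIntervalSupport, orderIntervalSupport, orderIntervalSupport,
    ← integral_add (hint u) (hint v)]
  refine integral_mono_ae (hint _) ((hint u).add (hint v)) ?_
  filter_upwards [Lp.coeFn_add u v] with z hz
  rw [hz, Pi.add_apply, mul_add, mul_add]
  exact max_le (add_le_add (le_max_left _ _) (le_max_left _ _))
    (add_le_add (le_max_right _ _) (le_max_right _ _))

lemma orderIntervalSupport_smul {c : ℝ} (hc : 0 < c) (u : Lp ℝ 2 μ) :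
    orderIntervalSupport μ Dm Dp ⇑(c • u) = c * orderIntervalSupport μ Dm Dp u := by
  rw [orderIntervalSupport, orderIntervalSupport, ← integral_const_mul]
  refine integral_congr_ae ?_
  filter_upwards [Lp.coeFn_smul c u] with z hz
  rw [hz, Pi.smul_apply, smul_eq_mul, mul_left_comm, mul_left_comm (Dp z),
    mul_max_of_nonneg _ _ hc.le]

lemma orderIntervalSupport_le (hDmC : ∀ z, |Dm z| ≤ C) (hDpC : ∀ z, |Dp z| ≤ C) {u : Z → ℝ}
    (hu : Integrable (fun z => max (Dm z * u z) (Dp z * u z)) μ) (hu' : Integrable u μ) :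
    orderIntervalSupport μ Dm Dp u ≤ C * ∫ z, |u z| ∂μ := by
  rw [orderIntervalSupport, ← integral_const_mul]
  exact integral_mono hu (hu'.abs.const_mul C) fun z => max_mul_le_mul_abs (hDmC z) (hDpC z) _

lemma setIntegral_mul_le_orderIntervalSupport [IsFiniteMeasure μ] {h₀ : Lp ℝ 2 μ}
    (hh₀ : ∀ u : Lp ℝ 2 μ, ∫ z, h₀ z * u z ∂μ ≤ orderIntervalSupport μ Dm Dp u)
    {A : Set Z} (hA : MeasurableSet A) (r : ℝ) :
    ∫ z in A, h₀ z * r ∂μ ≤ ∫ z in A, max (Dm z * r) (Dp z * r) ∂μ := by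
  have h := hh₀ (indicatorConstLp 2 hA (measure_ne_top μ A) r)
  have hind := indicatorConstLp_coeFn (p := 2) (hs := hA) (hμs := measure_ne_top μ A) (c := r)
  rw [orderIntervalSupport] at h
  rw [← integral_indicator hA, ← integral_indicator hA]
  convert h using 1 <;> refine integral_congr_ae ?_ <;> filter_upwards [hind] with z hz <;>
    by_cases hzA : z ∈ A <;> simp [hz, hzA]

end OrderIntervalSupport

section ConvexIntegrand

variable {Z : Type*} [MeasurableSpace Z] {μ : Measure Z} {φ : Z → ℝ → ℝ} {K : ℝ≥0} {t : Z → ℝ}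

lemma measurable_slope_of_measurable_uncurry (hφm : Measurable (uncurry φ)) (ht : Measurable t)
    (a : ℝ) : Measurable fun z => slope (φ z) (t z) (t z + a) := by
  simp only [slope_def_field]
  exact ((hφm.comp (measurable_id.prodMk (ht.add_const a))).sub
    (hφm.comp (measurable_id.prodMk ht))).div ((ht.add_const a).sub ht)

lemma measurable_derivWithin_Ioi_of_convexOn (hφm : Measurable (uncurry φ))
    (hφ : ∀ z, ConvexOn ℝ univ (φ z)) (ht : Measurable t) :
    Measurable fun z => derivWithin (φ z) (Ioi (t z)) (t z) := by
  refine measurable_of_tendsto_metrizable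
    (fun n => measurable_slope_of_measurable_uncurry hφm ht (1 / (n + 1)))
    (tendsto_pi_nhds.2 fun z => ((hφ z).tendsto_slope_rightDeriv (t z)).comp ?_)
  refine tendsto_nhdsWithin_of_tendsto_nhds_of_eventually_within _ ?_
    (Eventually.of_forall fun n => mem_Ioi.2 (lt_add_of_pos_right _ Nat.one_div_pos_of_nat))
  simpa using tendsto_const_nhds.add (tendsto_one_div_add_atTop_nhds_zero_nat (𝕜 := ℝ))

lemma measurable_derivWithin_Iio_of_convexOn (hφm : Measurable (uncurry φ))
    (hφ : ∀ z, ConvexOn ℝ univ (φ z)) (ht : Measurable t) :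
    Measurable fun z => derivWithin (φ z) (Iio (t z)) (t z) := by
  refine measurable_of_tendsto_metrizable
    (fun n => measurable_slope_of_measurable_uncurry hφm ht (-(1 / (n + 1))))
    (tendsto_pi_nhds.2 fun z => ((hφ z).tendsto_slope_leftDeriv (t z)).comp ?_)
  refine tendsto_nhdsWithin_of_tendsto_nhds_of_eventually_within _ ?_
    (Eventually.of_forall fun n =>
      mem_Iio.2 (add_lt_of_neg_right _ (neg_lt_zero.2 Nat.one_div_pos_of_nat)))
  simpa using tendsto_const_nhds.add (tendsto_one_div_add_atTop_nhds_zero_nat (𝕜 := ℝ)).neg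

lemma integrable_sub_of_lipschitzWith (hφm : Measurable (uncurry φ))
    (hK : ∀ z, LipschitzWith K (φ z)) {a b : Z → ℝ} (ha : AEMeasurable a μ)
    (hb : AEMeasurable b μ) (hab : Integrable (fun z => a z - b z) μ) :
    Integrable (fun z => φ z (a z) - φ z (b z)) μ :=
  (hab.norm.const_mul K).mono'
    ((hφm.comp_aemeasurable (aemeasurable_id.prodMk ha)).sub
      (hφm.comp_aemeasurable (aemeasurable_id.prodMk hb))).aestronglyMeasurable
    (ae_of_all _ fun z => by simpa [Real.dist_eq] using (hK z).dist_le_mul (a z) (b z))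

theorem tendsto_integral_sub_div_nhdsGT (hφm : Measurable (uncurry φ))
    (hφ : ∀ z, ConvexOn ℝ univ (φ z)) (hK : ∀ z, LipschitzWith K (φ z)) {u : Z → ℝ}
    (ht : AEMeasurable t μ) (hu : Integrable u μ) :
    Tendsto (fun s => ∫ z, (φ z (t z + s * u z) - φ z (t z)) / s ∂μ) (𝓝[>] 0)
      (𝓝 (orderIntervalSupport μ (fun z => derivWithin (φ z) (Iio (t z)) (t z))
        (fun z => derivWithin (φ z) (Ioi (t z)) (t z)) u)) := by
  refine tendsto_integral_filter_of_dominated_convergence (fun z => K * |u z|)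
    (Eventually.of_forall fun s => ?_) ?_ (hu.abs.const_mul _)
    (ae_of_all _ fun z => (hφ z).tendsto_sub_div_nhdsGT (t z) (u z))
  · exact (((hφm.comp_aemeasurable (aemeasurable_id.prodMk
      (ht.add (hu.aemeasurable.const_mul s)))).sub
      (hφm.comp_aemeasurable (aemeasurable_id.prodMk ht))).div_const s).aestronglyMeasurable
  · filter_upwards [self_mem_nhdsWithin] with s (hs : 0 < s)
    refine ae_of_all _ fun z => ?_
    have h := (hK z).dist_le_mul (t z + s * u z) (t z)
    rw [Real.dist_eq, Real.dist_eq, add_sub_cancel_left, abs_mul, abs_of_pos hs] at h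
    rw [Real.norm_eq_abs, abs_div, abs_of_pos hs, div_le_iff₀ hs]
    linarith

end ConvexIntegrand

theorem LinearMap.exists_comp_eq_of_le_sublinear {E F : Type*} [AddCommGroup E] [Module ℝ E]
    [AddCommGroup F] [Module ℝ F] (T : E →ₗ[ℝ] F) (ℓ : E →ₗ[ℝ] ℝ) (N : F → ℝ)
    (N_hom : ∀ c : ℝ, 0 < c → ∀ y, N (c • y) = c * N y) (N_add : ∀ y y', N (y + y') ≤ N y + N y')
    (hℓ : ∀ x, ℓ x ≤ N (T x)) : ∃ G : F →ₗ[ℝ] ℝ, (∀ x, G (T x) = ℓ x) ∧ ∀ y, G y ≤ N y := by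
  have hN0 : N 0 = 0 := by
    have h := N_hom 2 two_pos 0
    rw [smul_zero] at h
    linarith
  have hker : LinearMap.ker T ≤ LinearMap.ker ℓ := fun x hx => by
    rw [LinearMap.mem_ker] at hx ⊢
    have h1 := hℓ x
    have h2 := hℓ (-x)
    simp only [map_neg, hx, neg_zero, hN0] at h1 h2
    linarith
  let ℓ₀ : LinearMap.range T →ₗ[ℝ] ℝ :=
    (LinearMap.ker T).liftQ ℓ hker ∘ₗ T.quotKerEquivRange.symm.toLinearMap
  have hℓ₀ : ∀ x, ℓ₀ ⟨T x, LinearMap.mem_range_self T x⟩ = ℓ x := fun x => by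
    simp [ℓ₀, LinearMap.quotKerEquivRange_symm_apply_image]
  obtain ⟨G, hGext, hGN⟩ := exists_extension_of_le_sublinear ⟨LinearMap.range T, ℓ₀⟩ N N_hom N_add
    (by rintro ⟨_, x, rfl⟩; exact (hℓ₀ x).trans_le (hℓ x))
  exact ⟨G, fun x => (hGext ⟨T x, LinearMap.mem_range_self T x⟩).trans (hℓ₀ x), hGN⟩

theorem LinearMap.exists_eq_inner_of_le_mul_norm {E : Type*} [NormedAddCommGroup E]
    [InnerProductSpace ℝ E] [CompleteSpace E] (G : E →ₗ[ℝ] ℝ) (C : ℝ) (hG : ∀ x, G x ≤ C * ‖x‖) :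
    ∃ y : E, ∀ x, G x = ⟪y, x⟫ := by
  have hbound : ∀ x, ‖G x‖ ≤ C * ‖x‖ := fun x => by
    have := hG (-x)
    rw [map_neg, norm_neg] at this
    exact abs_le.2 ⟨by linarith, hG x⟩
  refine ⟨(InnerProductSpace.toDual ℝ E).symm (G.mkContinuous C hbound), fun x => ?_⟩
  rw [InnerProductSpace.toDual_symm_apply, LinearMap.mkContinuous_apply]

theorem integral_abs_le_mul_norm_L2 {Z : Type*} [MeasurableSpace Z] {μ : Measure Z}
    [IsFiniteMeasure μ] (u : Lp ℝ 2 μ) :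
    ∫ z, |u z| ∂μ ≤ (μ univ ^ (1 / 2 : ℝ)).toReal * ‖u‖ := by
  have h := eLpNorm_le_eLpNorm_mul_rpow_measure_univ (μ := μ) (p := 1) (q := 2) one_le_two
    (Lp.aestronglyMeasurable u)
  have hfin : eLpNorm u 2 μ * μ univ ^ (1 / (1 : ℝ≥0∞).toReal - 1 / (2 : ℝ≥0∞).toReal) ≠ ∞ :=
    ENNReal.mul_ne_top (Lp.eLpNorm_ne_top u)
      (ENNReal.rpow_ne_top_of_nonneg (by norm_num) (measure_ne_top μ univ))
  have h1 := ENNReal.toReal_mono hfin h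
  rw [ENNReal.toReal_mul, ← Lp.norm_def] at h1
  simp only [← Real.norm_eq_abs]
  rw [integral_norm_eq_lintegral_enorm (Lp.aestronglyMeasurable u),
    ← eLpNorm_one_eq_lintegral_enorm]
  norm_num at h1
  linarith

lemma exists_measurable_mem_Icc_ae_eq {Z : Type*} [MeasurableSpace Z] {μ : Measure Z}
    {f Dm Dp : Z → ℝ} (hf : AEStronglyMeasurable f μ) (hDm : Measurable Dm) (hDp : Measurable Dp)
    (hle : ∀ z, Dm z ≤ Dp z) (hfI : ∀ᵐ z ∂μ, f z ∈ Icc (Dm z) (Dp z)) :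
    ∃ h : Z → ℝ, Measurable h ∧ (∀ z, h z ∈ Icc (Dm z) (Dp z)) ∧ h =ᵐ[μ] f := by
  refine ⟨fun z => max (Dm z) (min (hf.mk f z) (Dp z)),
    hDm.max (hf.stronglyMeasurable_mk.measurable.min hDp),
    fun z => ⟨le_max_left _ _, max_le (hle z) (min_le_right _ _)⟩, ?_⟩
  filter_upwards [hf.ae_eq_mk, hfI] with z hz hzI
  rw [← hz, min_eq_left hzI.2, max_eq_right hzI.1]

noncomputable def MeasureTheory.MemLp.innerLp {Z H : Type*} [MeasurableSpace Z] {μ : Measure Z}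
    [NormedAddCommGroup H] [InnerProductSpace ℝ H] {p : ℝ≥0∞} {Ψ : Z → H} (hΨ : MemLp Ψ p μ) :
    H →ₗ[ℝ] Lp ℝ p μ where
  toFun g := (hΨ.const_inner (𝕜 := ℝ) g).toLp
  map_add' g g' := by
    refine Lp.ext ?_
    filter_upwards [Lp.coeFn_add (hΨ.const_inner (𝕜 := ℝ) g).toLp
        (hΨ.const_inner (𝕜 := ℝ) g').toLp, (hΨ.const_inner (𝕜 := ℝ) g).coeFn_toLp,
      (hΨ.const_inner (𝕜 := ℝ) g').coeFn_toLp, (hΨ.const_inner (𝕜 := ℝ) (g + g')).coeFn_toLp]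
      with z h h1 h2 h3
    rw [h, h3, Pi.add_apply, h1, h2, inner_add_left]
  map_smul' c g := by
    refine Lp.ext ?_
    filter_upwards [Lp.coeFn_smul c (hΨ.const_inner (𝕜 := ℝ) g).toLp,
      (hΨ.const_inner (𝕜 := ℝ) g).coeFn_toLp, (hΨ.const_inner (𝕜 := ℝ) (c • g)).coeFn_toLp]
      with z h h1 h2
    rw [RingHom.id_apply, h, h2, Pi.smul_apply, h1, real_inner_smul_left, smul_eq_mul]

lemma MeasureTheory.MemLp.innerLp_ae_eq {Z H : Type*} [MeasurableSpace Z] {μ : Measure Z}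
    [NormedAddCommGroup H] [InnerProductSpace ℝ H] {p : ℝ≥0∞} {Ψ : Z → H} (hΨ : MemLp Ψ p μ)
    (g : H) : ⇑(hΨ.innerLp g) =ᵐ[μ] fun z => ⟪g, Ψ z⟫ :=
  (hΨ.const_inner g).coeFn_toLp

section OrderIntervalSelection

variable {Z : Type*} [MeasurableSpace Z] {μ : Measure Z} [IsFiniteMeasure μ]
  {H : Type*} [NormedAddCommGroup H] [InnerProductSpace ℝ H]
  {Dm Dp : Z → ℝ} {C : ℝ}

lemma exists_Lp_integral_mul_le_orderIntervalSupport {Ψ : Z → H} (hΨ : MemLp Ψ 2 μ)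
    (hDm : Measurable Dm) (hDp : Measurable Dp) (hDmC : ∀ z, |Dm z| ≤ C) (hDpC : ∀ z, |Dp z| ≤ C)
    {w : H} (hw : ∀ g : H, ⟪w, g⟫ ≤ orderIntervalSupport μ Dm Dp fun z => ⟪g, Ψ z⟫) :
    ∃ h₀ : Lp ℝ 2 μ, (∀ u : Lp ℝ 2 μ, ∫ z, h₀ z * u z ∂μ ≤ orderIntervalSupport μ Dm Dp u) ∧
      ∀ g : H, ∫ z, h₀ z * ⟪g, Ψ z⟫ ∂μ = ⟪w, g⟫ := by
  have hint : ∀ u : Lp ℝ 2 μ, Integrable (fun z => max (Dm z * u z) (Dp z * u z)) μ :=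
    fun u => integrable_max_mul hDm hDp hDmC hDpC ((Lp.memLp u).integrable one_le_two)
  have hT : ∀ g, orderIntervalSupport μ Dm Dp ⇑(hΨ.innerLp g)
      = orderIntervalSupport μ Dm Dp fun z => ⟪g, Ψ z⟫ := fun g =>
    integral_congr_ae <| by filter_upwards [hΨ.innerLp_ae_eq g] with z hz; rw [hz]
  obtain ⟨G, hGT, hGN⟩ := hΨ.innerLp.exists_comp_eq_of_le_sublinear (innerₛₗ ℝ w)
    (fun u => orderIntervalSupport μ Dm Dp u) (fun c hc u => orderIntervalSupport_smul hc u)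
    (orderIntervalSupport_add_le hint) (fun g => (hw g).trans_eq (hT g).symm)
  have hGbound : ∀ u, G u ≤ |C| * (μ univ ^ (1 / 2 : ℝ)).toReal * ‖u‖ := fun u => calc
    G u ≤ C * ∫ z, |u z| ∂μ :=
      (hGN u).trans <|
        orderIntervalSupport_le hDmC hDpC (hint u) ((Lp.memLp u).integrable one_le_two)
    _ ≤ |C| * ∫ z, |u z| ∂μ :=
      mul_le_mul_of_nonneg_right (le_abs_self C) (integral_nonneg fun z => abs_nonneg _)
    _ ≤ |C| * ((μ univ ^ (1 / 2 : ℝ)).toReal * ‖u‖) :=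
      mul_le_mul_of_nonneg_left (integral_abs_le_mul_norm_L2 u) (abs_nonneg C)
    _ = _ := by ring
  obtain ⟨h₀, hh₀⟩ := G.exists_eq_inner_of_le_mul_norm _ hGbound
  have hG : ∀ u : Lp ℝ 2 μ, G u = ∫ z, h₀ z * u z ∂μ := fun u => by
    rw [hh₀, L2.inner_def]
    simp [mul_comm]
  refine ⟨h₀, fun u => (hG u).symm.trans_le (hGN u), fun g => ?_⟩
  rw [← innerₛₗ_apply_apply, ← hGT, hG]
  exact integral_congr_ae <| by filter_upwards [hΨ.innerLp_ae_eq g] with z hz; rw [hz]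

lemma ae_mem_Icc_of_integral_mul_le_orderIntervalSupport (hDm : Measurable Dm)
    (hDp : Measurable Dp) (hDmC : ∀ z, |Dm z| ≤ C) (hDpC : ∀ z, |Dp z| ≤ C)
    (hle : ∀ z, Dm z ≤ Dp z) {h₀ : Lp ℝ 2 μ}
    (hh₀ : ∀ u : Lp ℝ 2 μ, ∫ z, h₀ z * u z ∂μ ≤ orderIntervalSupport μ Dm Dp u) :
    ∀ᵐ z ∂μ, h₀ z ∈ Icc (Dm z) (Dp z) := by
  have hh₀i : Integrable h₀ μ := (Lp.memLp h₀).integrable one_le_two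
  have hDmi : Integrable Dm μ :=
    (integrable_const C).mono' hDm.aestronglyMeasurable (ae_of_all _ hDmC)
  have hDpi : Integrable Dp μ :=
    (integrable_const C).mono' hDp.aestronglyMeasurable (ae_of_all _ hDpC)
  have hlower : Dm ≤ᵐ[μ] h₀ := ae_le_of_forall_setIntegral_le hDmi hh₀i fun A hA _ => by
    have := setIntegral_mul_le_orderIntervalSupport hh₀ hA (-1)
    simp only [mul_neg_one, max_neg_neg, min_eq_left (hle _), integral_neg] at this
    linarith
  have hupper : ⇑h₀ ≤ᵐ[μ] Dp := ae_le_of_forall_setIntegral_le hh₀i hDpi fun A hA _ => by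
    simpa [max_eq_right (hle _)] using setIntegral_mul_le_orderIntervalSupport hh₀ hA 1
  filter_upwards [hlower, hupper] with z h1 h2 using ⟨h1, h2⟩

theorem exists_measurable_integral_smul_eq [CompleteSpace H] {Ψ : Z → H} (hΨ : MemLp Ψ 2 μ)
    (hDm : Measurable Dm) (hDp : Measurable Dp) (hDmC : ∀ z, |Dm z| ≤ C) (hDpC : ∀ z, |Dp z| ≤ C)
    (hle : ∀ z, Dm z ≤ Dp z) {w : H}
    (hw : ∀ g : H, ⟪w, g⟫ ≤ orderIntervalSupport μ Dm Dp fun z => ⟪g, Ψ z⟫) :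
    ∃ h : Z → ℝ, Measurable h ∧ (∀ z, h z ∈ Icc (Dm z) (Dp z)) ∧ ∫ z, h z • Ψ z ∂μ = w := by
  obtain ⟨h₀, hh₀N, hh₀w⟩ := exists_Lp_integral_mul_le_orderIntervalSupport hΨ hDm hDp hDmC hDpC hw
  obtain ⟨h, hhm, hhI, hhh₀⟩ := exists_measurable_mem_Icc_ae_eq (Lp.aestronglyMeasurable h₀)
    hDm hDp hle (ae_mem_Icc_of_integral_mul_le_orderIntervalSupport hDm hDp hDmC hDpC hle hh₀N)
  have hhC : ∀ z, ‖h z‖ ≤ C := fun z =>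
    abs_le.2 ⟨(abs_le.1 (hDmC z)).1.trans (hhI z).1, (hhI z).2.trans (abs_le.1 (hDpC z)).2⟩
  have hhΨ : Integrable (fun z => h z • Ψ z) μ :=
    (hΨ.integrable one_le_two).bdd_smul C hhm.aestronglyMeasurable (ae_of_all _ hhC)
  refine ⟨h, hhm, hhI, ext_inner_left ℝ fun g => ?_⟩
  rw [← integral_inner hhΨ g, real_inner_comm, ← hh₀w g]
  refine integral_congr_ae ?_
  filter_upwards [hhh₀] with z hz
  rw [real_inner_smul_right, hz]

end OrderIntervalSelection

section HilbertSpace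

variable {H : Type*} [NormedAddCommGroup H] [InnerProductSpace ℝ H]

theorem neg_two_mul_inner_le_of_tendsto_sub_div {F : H → ℝ} {lam D : ℝ} {f g : H}
    (hf : ∀ f', F f + lam * ‖f‖ ^ 2 ≤ F f' + lam * ‖f'‖ ^ 2)
    (hD : Tendsto (fun s : ℝ => (F (f + s • g) - F f) / s) (𝓝[>] 0) (𝓝 D)) :
    -(2 * lam) * ⟪f, g⟫ ≤ D := by
  have hlim : Tendsto (fun s : ℝ => (F (f + s • g) - F f) / s + lam * (2 * ⟪f, g⟫ + s * ‖g‖ ^ 2))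
      (𝓝[>] 0) (𝓝 (D + lam * (2 * ⟪f, g⟫ + 0 * ‖g‖ ^ 2))) :=
    hD.add <| ((tendsto_nhdsWithin_of_tendsto_nhds tendsto_id).mul_const _).const_add _
      |>.const_mul _
  have hpos : ∀ᶠ s in 𝓝[>] (0 : ℝ),
      0 ≤ (F (f + s • g) - F f) / s + lam * (2 * ⟪f, g⟫ + s * ‖g‖ ^ 2) := by
    filter_upwards [self_mem_nhdsWithin] with s (hs : 0 < s)
    have h := hf (f + s • g)
    rw [norm_add_sq_real, inner_smul_right, norm_smul, Real.norm_eq_abs, abs_of_pos hs] at h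
    rw [← mul_le_mul_iff_of_pos_left hs, mul_zero, mul_add, mul_div_cancel₀ _ hs.ne']
    nlinarith
  have := ge_of_tendsto hlim hpos
  linarith

theorem norm_sub_le_of_subgradient {F : H → ℝ} {lam : ℝ} (hlam : 0 < lam) {f f' b : H}
    (hsub : F f + ⟪f' - f, b⟫ ≤ F f')
    (hf' : F f' + lam * ‖f'‖ ^ 2 ≤ F f + lam * ‖f‖ ^ 2) :
    ‖f - f'‖ ≤ lam⁻¹ * ‖-(2 * lam) • f - b‖ := by
  have hsq : lam * ‖f' - f‖ ^ 2 ≤ ⟪f' - f, -(2 * lam) • f - b⟫ := by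
    have h := norm_add_sq_real f (f' - f)
    rw [add_sub_cancel] at h
    rw [inner_sub_right, inner_smul_right, real_inner_comm f]
    nlinarith
  rw [norm_sub_rev, le_inv_mul_iff₀ hlam]
  rcases (norm_nonneg (f' - f)).eq_or_lt with h0 | h0
  · rw [← h0, mul_zero]; exact norm_nonneg _
  · refine le_of_mul_le_mul_right ?_ h0
    calc lam * ‖f' - f‖ * ‖f' - f‖ = lam * ‖f' - f‖ ^ 2 := by ring
      _ ≤ ‖f' - f‖ * ‖-(2 * lam) • f - b‖ := hsq.trans (real_inner_le_norm _ _)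
      _ = _ := mul_comm _ _

end HilbertSpace

/-- With `φ z = L z.1.1 z.1.2 z.2.1 z.2.2` and `Ψ z = Φ (z.1.1, z.2.1)` on `Z = (X × Y)²`,
`featureRisk (P.prod P) φ Ψ f` is definitionally `shiftedRisk L P (fhat Φ f)`. -/
noncomputable def featureRisk {Z H : Type*} [MeasurableSpace Z] [NormedAddCommGroup H]
    [InnerProductSpace ℝ H] (μ : Measure Z) (φ : Z → ℝ → ℝ) (Ψ : Z → H) (f : H) : ℝ :=
  ∫ z, (φ z ⟪f, Ψ z⟫ - φ z 0) ∂μ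

namespace featureRisk

variable {Z H : Type*} [MeasurableSpace Z] [NormedAddCommGroup H] [InnerProductSpace ℝ H]
  {μ : Measure Z} {φ : Z → ℝ → ℝ} {K : ℝ≥0} {Ψ : Z → H}

lemma integrable_sub_inner (hφm : Measurable (uncurry φ)) (hK : ∀ z, LipschitzWith K (φ z))
    (hΨ : Integrable Ψ μ) (f : H) : Integrable (fun z => φ z ⟪f, Ψ z⟫ - φ z 0) μ :=
  integrable_sub_of_lipschitzWith hφm hK (hΨ.const_inner f).aemeasurable aemeasurable_const
    (by simpa using hΨ.const_inner f)

theorem tendsto_sub_div_nhdsGT (hφm : Measurable (uncurry φ)) (hφ : ∀ z, ConvexOn ℝ univ (φ z))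
    (hK : ∀ z, LipschitzWith K (φ z)) (hΨ : Integrable Ψ μ) (f g : H) :
    Tendsto (fun s : ℝ => (featureRisk μ φ Ψ (f + s • g) - featureRisk μ φ Ψ f) / s) (𝓝[>] 0)
      (𝓝 (orderIntervalSupport μ (fun z => derivWithin (φ z) (Iio ⟪f, Ψ z⟫) ⟪f, Ψ z⟫)
        (fun z => derivWithin (φ z) (Ioi ⟪f, Ψ z⟫) ⟪f, Ψ z⟫) fun z => ⟪g, Ψ z⟫)) := by
  refine (tendsto_integral_sub_div_nhdsGT hφm hφ hK
    (hΨ.const_inner f).aemeasurable (hΨ.const_inner g)).congr fun s => ?_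
  rw [featureRisk, featureRisk, ← integral_sub (integrable_sub_inner hφm hK hΨ _)
    (integrable_sub_inner hφm hK hΨ f), ← integral_div]
  congr 1 with z
  rw [inner_add_left, real_inner_smul_left]
  ring

theorem add_inner_integral_le [CompleteSpace H] (hφm : Measurable (uncurry φ))
    (hK : ∀ z, LipschitzWith K (φ z))
    (hΨ : Integrable Ψ μ) {h : Z → ℝ} (hhm : Measurable h) {C : ℝ} (hhC : ∀ z, |h z| ≤ C)
    {f : H} (hsub : ∀ z v, h z * (v - ⟪f, Ψ z⟫) ≤ φ z v - φ z ⟪f, Ψ z⟫) (f' : H) :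
    featureRisk μ φ Ψ f + ⟪f' - f, ∫ z, h z • Ψ z ∂μ⟫ ≤ featureRisk μ φ Ψ f' := by
  have hhΨ : Integrable (fun z => h z • Ψ z) μ :=
    hΨ.bdd_smul C hhm.aestronglyMeasurable (ae_of_all _ hhC)
  have hh : Integrable (fun z => ⟪f' - f, h z • Ψ z⟫) μ := hhΨ.const_inner _
  have hF := integrable_sub_inner hφm hK hΨ
  rw [← integral_inner hhΨ, featureRisk, featureRisk, ← integral_add (hF f) hh]
  refine integral_mono ((hF f).add hh) (hF f') fun z => ?_
  have := hsub z ⟪f', Ψ z⟫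
  simp only [real_inner_smul_right, inner_sub_left] at this ⊢
  linarith

theorem exists_subgradient_representer [IsFiniteMeasure μ] [CompleteSpace H]
    (hφm : Measurable (uncurry φ)) (hφ : ∀ z, ConvexOn ℝ univ (φ z))
    (hK : ∀ z, LipschitzWith K (φ z)) (hΨm : StronglyMeasurable Ψ) (hΨ : MemLp Ψ 2 μ)
    {lam : ℝ} {f : H}
    (hf : ∀ f', featureRisk μ φ Ψ f + lam * ‖f‖ ^ 2 ≤ featureRisk μ φ Ψ f' + lam * ‖f'‖ ^ 2) :
    ∃ h : Z → ℝ, Measurable h ∧ (∀ z v, h z * (v - ⟪f, Ψ z⟫) ≤ φ z v - φ z ⟪f, Ψ z⟫) ∧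
      (∀ z, |h z| ≤ K) ∧ ∫ z, h z • Ψ z ∂μ = -(2 * lam) • f := by
  have ht : Measurable fun z => ⟪f, Ψ z⟫ := (stronglyMeasurable_const.inner hΨm).measurable
  obtain ⟨h, hhm, hhI, hrep⟩ := exists_measurable_integral_smul_eq hΨ
    (measurable_derivWithin_Iio_of_convexOn hφm hφ ht)
    (measurable_derivWithin_Ioi_of_convexOn hφm hφ ht)
    (fun z => (hφ z).abs_leftDeriv_le (hK z) _) (fun z => (hφ z).abs_rightDeriv_le (hK z) _)
    (fun z => (hφ z).leftDeriv_le_rightDeriv _) (w := -(2 * lam) • f) fun g => by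
      rw [real_inner_smul_left]
      exact neg_two_mul_inner_le_of_tendsto_sub_div hf
        (tendsto_sub_div_nhdsGT hφm hφ hK (hΨ.integrable one_le_two) f g)
  refine ⟨h, hhm, fun z v => (hφ z).mul_sub_le_sub (hhI z).1 (hhI z).2 v, fun z => ?_, hrep⟩
  exact abs_le.2 ⟨((hφ z).neg_le_leftDeriv (hK z) _).trans (hhI z).1,
    (hhI z).2.trans ((hφ z).rightDeriv_le (hK z) _)⟩

end featureRisk

theorem representer_theorem_general
    {X Y H : Type*} [MeasurableSpace X] [MeasurableSpace Y]
    [NormedAddCommGroup H] [InnerProductSpace ℝ H] [CompleteSpace H]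
    [TopologicalSpace.SeparableSpace H] [MeasurableSpace H] [BorelSpace H]
    (L : X → Y → X → Y → ℝ → ℝ)
    (hL_meas : Measurable fun p : (X × Y) × (X × Y) × ℝ => L p.1.1 p.1.2 p.2.1.1 p.2.1.2 p.2.2)
    (hL_convex : ∀ x y x' y', ConvexOn ℝ Set.univ (L x y x' y'))
    (c : ℝ) (hc : 0 ≤ c)
    (hL_lip : ∀ x y x' y' s t, |L x y x' y' t - L x y x' y' s| ≤ c * |t - s|)
    (Φ : X × X → H) (hΦ : Measurable Φ)
    (kb : ℝ) (hkb : ∀ p : X × X, ‖Φ p‖ ≤ kb)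
    (P : Measure (X × Y)) [IsProbabilityMeasure P]
    (lam : ℝ) (hlam : 0 < lam)
    (fP : H) (hfP : ∀ g : H, regRisk L Φ P lam fP ≤ regRisk L Φ P lam g) :
    ∃ h : (X × Y) × (X × Y) → ℝ, Measurable h ∧
      (∀ (x : X) (y : Y) (x' : X) (y' : Y) (v : ℝ),
        h ((x, y), (x', y')) * (v - fhat Φ fP (x, x'))
          ≤ (L x y x' y' v - L x y x' y' 0)
            - (L x y x' y' (fhat Φ fP (x, x')) - L x y x' y' 0)) ∧
      fP = (-(2 * lam)⁻¹) • ∫ z : (X × Y) × (X × Y), h z • Φ (z.1.1, z.2.1) ∂(P.prod P) ∧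
      (∀ z : (X × Y) × (X × Y), |h z| ≤ c) ∧
      (∀ Q : Measure (X × Y), IsProbabilityMeasure Q → ∀ fQ : H,
        (∀ g : H, regRisk L Φ Q lam fQ ≤ regRisk L Φ Q lam g) →
        ‖fP - fQ‖ ≤ lam⁻¹ *
          ‖(∫ z : (X × Y) × (X × Y), h z • Φ (z.1.1, z.2.1) ∂(P.prod P))
            - ∫ z : (X × Y) × (X × Y), h z • Φ (z.1.1, z.2.1) ∂(Q.prod Q)‖) := by
  let φ : (X × Y) × (X × Y) → ℝ → ℝ := fun z => L z.1.1 z.1.2 z.2.1 z.2.2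
  let Ψ : (X × Y) × (X × Y) → H := fun z => Φ (z.1.1, z.2.1)
  have hφm : Measurable (uncurry φ) :=
    hL_meas.comp (measurable_fst.fst.prodMk (measurable_fst.snd.prodMk measurable_snd))
  have hK : ∀ z, LipschitzWith c.toNNReal (φ z) := fun z => LipschitzWith.of_dist_le_mul
    fun s t => by simpa [Real.dist_eq, hc] using hL_lip z.1.1 z.1.2 z.2.1 z.2.2 t s
  have hΨm : StronglyMeasurable Ψ := (hΦ.comp (by fun_prop)).stronglyMeasurable
  have hΨ : ∀ (ν : Measure ((X × Y) × (X × Y))) [IsFiniteMeasure ν], MemLp Ψ 2 ν :=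
    fun ν _ => MemLp.of_bound hΨm.aestronglyMeasurable kb (ae_of_all _ fun z => hkb _)
  obtain ⟨h, hhm, hsub, hhK, hrep⟩ := featureRisk.exists_subgradient_representer hφm
    (fun z => hL_convex _ _ _ _) hK hΨm (hΨ _) hfP
  refine ⟨h, hhm, fun x y x' y' v => ?_, ?_, fun z => ?_, fun Q _ fQ hfQ => ?_⟩
  · have := hsub ((x, y), (x', y')) v
    simp only [φ, Ψ] at this
    simp only [fhat]
    linarith
  · rw [hrep, smul_smul, neg_mul_neg, inv_mul_cancel₀ (by positivity), one_smul]
  · simpa [hc] using hhK z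
  · rw [hrep]
    exact norm_sub_le_of_subgradient hlam (featureRisk.add_inner_integral_le hφm hK
      ((hΨ _).integrable one_le_two) hhm hhK hsub fQ) (hfQ fP)

/-- **Representer theorem for regularized pairwise learning.** Let `L` be convex in its fifth
argument and Lipschitz with constant `|L|₁ = c`, let `H` be a separable Hilbert space with
bounded measurable feature map `Φ` (`‖Φ(x,x')‖ ≤ kb`), `λ > 0` and let `f_P` minimize the
regularized shifted risk for `P`. Then there is a bounded measurable `h : (X×Y)² → ℝ` with:
(i) `h` is a pointwise subgradient selection of `L*` along `f̂_P`;
(ii) `f_P = -(2λ)⁻¹ ∫ h ⬝ Φ d(P⊗P)`;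
(iii) `|h| ≤ |L|₁`; and
(iv) for every probability measure `Q` with minimizer `f_Q`,
`‖f_P - f_Q‖ ≤ λ⁻¹ ‖∫ h Φ d(P⊗P) - ∫ h Φ d(Q⊗Q)‖`. -/
theorem representer_theorem
    {X Y H : Type*} [MeasurableSpace X] [MeasurableSpace Y]
    [NormedAddCommGroup H] [InnerProductSpace ℝ H] [CompleteSpace H]
    [TopologicalSpace.SeparableSpace H] [MeasurableSpace H] [BorelSpace H]
    (L : X → Y → X → Y → ℝ → ℝ)
    (hL_meas : Measurable fun p : (X × Y) × (X × Y) × ℝ => L p.1.1 p.1.2 p.2.1.1 p.2.1.2 p.2.2)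
    (hL_nonneg : ∀ x y x' y' t, 0 ≤ L x y x' y' t)
    (hL_convex : ∀ x y x' y', ConvexOn ℝ Set.univ (L x y x' y'))
    (c : ℝ) (hc : 0 ≤ c)
    (hL_lip : ∀ x y x' y' s t, |L x y x' y' t - L x y x' y' s| ≤ c * |t - s|)
    (Φ : X × X → H) (hΦ : Measurable Φ)
    (kb : ℝ) (hkb : ∀ p : X × X, ‖Φ p‖ ≤ kb)
    (P : Measure (X × Y)) [IsProbabilityMeasure P]
    (lam : ℝ) (hlam : 0 < lam)
    (fP : H) (hfP : ∀ g : H, regRisk L Φ P lam fP ≤ regRisk L Φ P lam g) :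
    ∃ h : (X × Y) × (X × Y) → ℝ, Measurable h ∧
      (∀ (x : X) (y : Y) (x' : X) (y' : Y) (v : ℝ),
        h ((x, y), (x', y')) * (v - fhat Φ fP (x, x'))
          ≤ (L x y x' y' v - L x y x' y' 0)
            - (L x y x' y' (fhat Φ fP (x, x')) - L x y x' y' 0)) ∧
      fP = (-(2 * lam)⁻¹) • ∫ z : (X × Y) × (X × Y), h z • Φ (z.1.1, z.2.1) ∂(P.prod P) ∧
      (∀ z : (X × Y) × (X × Y), |h z| ≤ c) ∧
      (∀ Q : Measure (X × Y), IsProbabilityMeasure Q → ∀ fQ : H,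
        (∀ g : H, regRisk L Φ Q lam fQ ≤ regRisk L Φ Q lam g) →
        ‖fP - fQ‖ ≤ lam⁻¹ *
          ‖(∫ z : (X × Y) × (X × Y), h z • Φ (z.1.1, z.2.1) ∂(P.prod P))
            - ∫ z : (X × Y) × (X × Y), h z • Φ (z.1.1, z.2.1) ∂(Q.prod Q)‖) :=
  representer_theorem_general L hL_meas hL_convex c hc hL_lip Φ hΦ kb hkb P lam hlam fP hfP
end

section
/- Under the standing assumptions, fix a Borel probability measure P on X×Y, λ > 0, and f ∈ H, and define the linear map M : H → H by M(g) := 2λ·g + ∫ D₅D₅L(x,y,x',y',f̂(x,x'))·⟪Φ(x,x'), g⟫_H·Φ(x,x') d(P⊗P)(x,y,x',y'). Then M is a bounded (continuous) linear operator on H, satisfies ⟪M(g), g⟫_H ≥ 2λ‖g‖²_H for all g ∈ H, and is bijective (hence invertible with bounded inverse). -/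
open Filter Topology MeasureTheory InnerProductSpace

theorem ConvexOn.nonneg_of_hasDerivAt₂ {f f' : ℝ → ℝ} {f'' t : ℝ}
    (hf : ConvexOn ℝ Set.univ f) (hf' : ∀ s, HasDerivAt f (f' s) s)
    (hf'' : HasDerivAt f' f'' t) : 0 ≤ f'' := by
  have hderiv : deriv f = f' := funext fun s => (hf' s).deriv
  refine hf''.nonneg_of_monotone ?_
  rw [← hderiv, ← monotoneOn_univ]
  exact hf.monotoneOn_deriv fun s _ => (hf' s).differentiableAt

theorem measurable_uncurry_of_hasDerivAt {α : Type*} [MeasurableSpace α] {F F' : α → ℝ → ℝ}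
    (hF : Measurable (Function.uncurry F)) (hF' : ∀ p t, HasDerivAt (F p) (F' p t) t) :
    Measurable (Function.uncurry F') := by
  have hstep : Tendsto (fun n : ℕ => 1 / ((n : ℝ) + 1)) atTop (𝓝[≠] 0) :=
    tendsto_nhdsWithin_of_tendsto_nhds_of_eventually_within _
      tendsto_one_div_add_atTop_nhds_zero_nat
      (Eventually.of_forall fun n => Nat.one_div_pos_of_nat.ne')
  refine measurable_of_tendsto_metrizable
    (f := fun (n : ℕ) q => (1 / ((n : ℝ) + 1))⁻¹ • (F q.1 (q.2 + 1 / (n + 1)) - F q.1 q.2))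
    (fun n => by fun_prop) (tendsto_pi_nhds.mpr fun q => ?_)
  exact (hasDerivAt_iff_tendsto_slope_zero.mp (hF' q.1 q.2)).comp hstep

theorem ContinuousLinearMap.bijective_of_coercive {H : Type*} [NormedAddCommGroup H] [InnerProductSpace ℝ H]
    [CompleteSpace H] (M : H →L[ℝ] H) {C : ℝ} (hC : 0 < C)
    (hM : ∀ g, C * ‖g‖ ^ 2 ≤ ⟪M g, g⟫_ℝ) : Function.Bijective M := by
  set B : H →L[ℝ] H →L[ℝ] ℝ := innerSL ℝ ∘L M
  have hB : IsCoercive B := ⟨C, hC, fun g => by rw [mul_assoc, ← pow_two]; exact hM g⟩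
  have hBM : continuousLinearMapOfBilin B = M :=
    ContinuousLinearMap.ext fun v => (unique_continuousLinearMapOfBilin B fun w => rfl).symm
  rw [← hBM]
  exact ⟨LinearMap.ker_eq_bot.mp hB.ker_eq_bot, LinearMap.range_eq_top.mp hB.range_eq_top⟩

section WeightedCovariance

variable {Ω H : Type*} [MeasurableSpace Ω] [NormedAddCommGroup H] [InnerProductSpace ℝ H]
  {μ : Measure Ω} {a : Ω → ℝ} {φ : Ω → H}

noncomputable def weightedCovariance (μ : Measure Ω) (a : Ω → ℝ) (φ : Ω → H) : H →L[ℝ] H :=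
  ∫ z, a z • rankOne ℝ (φ z) (φ z) ∂μ

theorem integrable_smul_rankOne [IsFiniteMeasure μ] (ha : AEStronglyMeasurable a μ)
    (hφ : AEStronglyMeasurable φ μ) {Ca Cφ : ℝ} (ha_bdd : ∀ z, |a z| ≤ Ca)
    (hφ_bdd : ∀ z, ‖φ z‖ ≤ Cφ) :
    Integrable (fun z => a z • rankOne ℝ (φ z) (φ z)) μ := by
  have hrankOne : Continuous fun v : H => rankOne ℝ v v :=
    (rankOne ℝ : H →L[ℝ] H →L[ℝ] H →L[ℝ] H).continuous₂.comp (continuous_id.prodMk continuous_id)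
  refine Integrable.mono' (integrable_const (Ca * (Cφ * Cφ)))
    (ha.smul (hrankOne.comp_aestronglyMeasurable hφ)) (Eventually.of_forall fun z => ?_)
  have hCa : 0 ≤ Ca := (abs_nonneg _).trans (ha_bdd z)
  have hCφ : 0 ≤ Cφ := (norm_nonneg _).trans (hφ_bdd z)
  rw [norm_smul, norm_rankOne, Real.norm_eq_abs]
  exact mul_le_mul (ha_bdd z) (mul_le_mul (hφ_bdd z) (hφ_bdd z) (norm_nonneg _) hCφ)
    (by positivity) hCa

theorem weightedCovariance_apply
    (hint : Integrable (fun z => a z • rankOne ℝ (φ z) (φ z)) μ) (g : H) :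
    weightedCovariance μ a φ g = ∫ z, (a z * ⟪φ z, g⟫_ℝ) • φ z ∂μ := by
  simp only [weightedCovariance, ContinuousLinearMap.integral_apply hint,
    smul_apply, rankOne_apply, smul_smul]

theorem inner_weightedCovariance_self_nonneg [CompleteSpace H]
    (hint : Integrable (fun z => a z • rankOne ℝ (φ z) (φ z)) μ) (ha : ∀ z, 0 ≤ a z) (g : H) :
    0 ≤ ⟪weightedCovariance μ a φ g, g⟫_ℝ := by
  rw [weightedCovariance, ContinuousLinearMap.integral_apply hint, real_inner_comm,
    ← integral_inner (hint.apply_continuousLinearMap g)]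
  refine integral_nonneg fun z => ?_
  simp only [smul_apply, rankOne_apply, inner_smul_right, real_inner_comm g]
  exact mul_nonneg (ha z) (mul_self_nonneg _)

end WeightedCovariance

theorem operator_M_invertible_general
    {X : Type*} [MetricSpace X] [TopologicalSpace.SeparableSpace X]
    [MeasurableSpace X] [BorelSpace X]
    {H : Type*} [NormedAddCommGroup H] [InnerProductSpace ℝ H] [CompleteSpace H]
    (Y : Set ℝ)
    (L D₅L D₅D₅L : X → Y → X → Y → ℝ → ℝ)
    (hL_meas : Measurable fun p : (X × Y) × (X × Y) × ℝ => L p.1.1 p.1.2 p.2.1.1 p.2.1.2 p.2.2)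
    (hL_convex : ∀ x y x' y', ConvexOn ℝ Set.univ (L x y x' y'))
    (hD1 : ∀ x y x' y' t, HasDerivAt (L x y x' y') (D₅L x y x' y' t) t)
    (hD2 : ∀ x y x' y' t, HasDerivAt (D₅L x y x' y') (D₅D₅L x y x' y' t) t)
    (cL2 : ℝ) (hD2bdd : ∀ x y x' y' t, |D₅D₅L x y x' y' t| ≤ cL2)
    (Φ : X × X → H) (hΦcont : Continuous Φ)
    (kb : ℝ) (hkb : ∀ p : X × X, ‖Φ p‖ ≤ kb)
    (P : Measure (X × Y)) [IsProbabilityMeasure P]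
    (lam : ℝ) (hlam : 0 < lam) (f : H) :
    ∃ M : H →L[ℝ] H,
      (∀ g : H, M g = (2 * lam) • g +
        ∫ z : (X × Y) × (X × Y),
          (D₅D₅L z.1.1 z.1.2 z.2.1 z.2.2 (fhat Φ f (z.1.1, z.2.1))
            * (@inner ℝ H _ (Φ (z.1.1, z.2.1)) g)) • Φ (z.1.1, z.2.1) ∂(P.prod P)) ∧
      (∀ g : H, 2 * lam * ‖g‖ ^ 2 ≤ @inner ℝ H _ (M g) g) ∧
      Function.Bijective M := by
  set φ : (X × Y) × (X × Y) → H := fun z => Φ (z.1.1, z.2.1)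
  set a : (X × Y) × (X × Y) → ℝ :=
    fun z => D₅D₅L z.1.1 z.1.2 z.2.1 z.2.2 (fhat Φ f (z.1.1, z.2.1))
  have hφ : Continuous φ := by fun_prop
  have ha_meas : Measurable a := by
    have hL : Measurable (Function.uncurry fun z : (X × Y) × (X × Y) =>
        L z.1.1 z.1.2 z.2.1 z.2.2) :=
      hL_meas.comp (f := fun q : ((X × Y) × (X × Y)) × ℝ => (q.1.1, q.1.2, q.2)) (by fun_prop)
    have hD₅D₅L := measurable_uncurry_of_hasDerivAt
      (measurable_uncurry_of_hasDerivAt hL fun z => hD1 z.1.1 z.1.2 z.2.1 z.2.2)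
      fun z => hD2 z.1.1 z.1.2 z.2.1 z.2.2
    exact hD₅D₅L.comp (measurable_id.prodMk (continuous_const.inner hφ).measurable)
  have ha_nonneg : ∀ z, 0 ≤ a z := fun z =>
    (hL_convex _ _ _ _).nonneg_of_hasDerivAt₂ (hD1 _ _ _ _) (hD2 _ _ _ _ _)
  have hint := integrable_smul_rankOne (μ := P.prod P) ha_meas.aestronglyMeasurable
    hφ.aestronglyMeasurable (fun _ => hD2bdd _ _ _ _ _) fun _ => hkb _
  set M : H →L[ℝ] H := (2 * lam) • ContinuousLinearMap.id ℝ H + weightedCovariance (P.prod P) a φ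
  have hM_coercive : ∀ g : H, 2 * lam * ‖g‖ ^ 2 ≤ ⟪M g, g⟫_ℝ := fun g => by
    have := inner_weightedCovariance_self_nonneg hint ha_nonneg g
    simp only [M, add_apply, smul_apply, ContinuousLinearMap.id_apply, inner_add_left,
      real_inner_smul_left, real_inner_self_eq_norm_sq]
    linarith
  refine ⟨M, fun g => ?_, hM_coercive, M.bijective_of_coercive (by positivity) hM_coercive⟩
  simp [M, weightedCovariance_apply hint, φ, a]

/-- **The operator `M(P)` is bounded, coercive and invertible** (part of Theorem 3.4).
Under the standing assumptions (Polish input space `X`, closed `Y ⊆ ℝ`, Lipschitz convex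
twice differentiable loss with bounded derivatives, bounded continuous kernel), for every
probability measure `P`, `λ > 0` and `f ∈ H`, the map
`M(g) = 2λ g + ∫ D₅D₅L(x,y,x',y',f̂(x,x')) ⟪Φ(x,x'), g⟫ Φ(x,x') d(P⊗P)`
is a bounded linear operator on `H` with `⟪M g, g⟫ ≥ 2λ‖g‖²`, and `M` is bijective. -/
theorem operator_M_invertible
    {X : Type*} [MetricSpace X] [CompleteSpace X] [TopologicalSpace.SeparableSpace X]
    [MeasurableSpace X] [BorelSpace X]
    {H : Type*} [NormedAddCommGroup H] [InnerProductSpace ℝ H] [CompleteSpace H]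
    [TopologicalSpace.SeparableSpace H]
    (Y : Set ℝ) (hYclosed : IsClosed Y)
    (L D₅L D₅D₅L : X → Y → X → Y → ℝ → ℝ)
    (hL_meas : Measurable fun p : (X × Y) × (X × Y) × ℝ => L p.1.1 p.1.2 p.2.1.1 p.2.1.2 p.2.2)
    (hL_nonneg : ∀ x y x' y' t, 0 ≤ L x y x' y' t)
    (hL_convex : ∀ x y x' y', ConvexOn ℝ Set.univ (L x y x' y'))
    (c : ℝ) (hL_lip : ∀ x y x' y' s t, |L x y x' y' t - L x y x' y' s| ≤ c * |t - s|)
    (hD1 : ∀ x y x' y' t, HasDerivAt (L x y x' y') (D₅L x y x' y' t) t)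
    (hD2 : ∀ x y x' y' t, HasDerivAt (D₅L x y x' y') (D₅D₅L x y x' y' t) t)
    (hD1cont : ∀ x y x' y', Continuous (D₅L x y x' y'))
    (hD2cont : ∀ x y x' y', Continuous (D₅D₅L x y x' y'))
    (cL1 : ℝ) (hcL1 : 0 < cL1) (hD1bdd : ∀ x y x' y' t, |D₅L x y x' y' t| ≤ cL1)
    (cL2 : ℝ) (hcL2 : 0 < cL2) (hD2bdd : ∀ x y x' y' t, |D₅D₅L x y x' y' t| ≤ cL2)
    (Φ : X × X → H) (hΦcont : Continuous Φ)
    (kb : ℝ) (hkb : ∀ p : X × X, ‖Φ p‖ ≤ kb)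
    (P : Measure (X × Y)) [IsProbabilityMeasure P]
    (lam : ℝ) (hlam : 0 < lam) (f : H) :
    ∃ M : H →L[ℝ] H,
      (∀ g : H, M g = (2 * lam) • g +
        ∫ z : (X × Y) × (X × Y),
          (D₅D₅L z.1.1 z.1.2 z.2.1 z.2.2 (fhat Φ f (z.1.1, z.2.1))
            * (@inner ℝ H _ (Φ (z.1.1, z.2.1)) g)) • Φ (z.1.1, z.2.1) ∂(P.prod P)) ∧
      (∀ g : H, 2 * lam * ‖g‖ ^ 2 ≤ @inner ℝ H _ (M g) g) ∧
      Function.Bijective M :=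
  operator_M_invertible_general Y L D₅L D₅D₅L hL_meas hL_convex hD1 hD2 cL2 hD2bdd Φ hΦcont kb hkb P
    lam hlam f
end
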